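/- arXiv:math/0312020 — 8 statements merged into one kernel-verified Lean document; each statement's English description precedes it below -/
import Mathlib

section
/- For any Young diagram λ, the squares that can be added to λ and the squares that can be removed from λ are perfectly interleaved when ordered by the diagonal j−i containing them: between any two consecutive addable squares there is exactly one removable square, all addable and removable squares lie on distinct diagonals, and the extreme (leftmost and rightmost) ones are addable. -/
/-!
Let `D i = rowLen i - i` be the diagonal of the first empty square of row `i`; it is strictly
decreasing in `i`. The addable squares are the first empty squares of row `0` and of every row
`i + 1` shorter than row `i`, so they lie on the diagonals `D`. Row `i` has a removable square
exactly when row `i + 1` has an addable one, and its diagonal `D i - 1` lies strictly between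
`D (i + 1)` and `D i`. Hence, going down the diagonals from `D 0`, addable and removable squares
alternate, and the sequence starts and ends with an addable square.
-/

open scoped Classical

/-- The diagonal `j - i` of the square `(i, j)`. -/
def diagOf (c : ℕ × ℕ) : ℤ := (c.2 : ℤ) - (c.1 : ℤ)

/-- The square `c` can be added to `μ`, yielding a Young diagram. -/
def Addable (μ : YoungDiagram) (c : ℕ × ℕ) : Prop :=
  c ∉ μ ∧ ∃ ν : YoungDiagram, ν.cells = insert c μ.cells

/-- The square `c` can be removed from `μ`, yielding a Young diagram. -/
def Removable (μ : YoungDiagram) (c : ℕ × ℕ) : Prop :=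
  c ∈ μ ∧ ∃ ν : YoungDiagram, ν.cells = μ.cells.erase c

lemma IsLowerSet.insert_iff {α : Type*} [PartialOrder α] {s : Set α} {a : α}
    (hs : IsLowerSet s) : IsLowerSet (insert a s) ↔ ∀ b < a, b ∈ s := by
  refine ⟨fun h b hb => (h hb.le (Set.mem_insert a s)).resolve_left hb.ne, ?_⟩
  rintro h x y hyx (rfl | hx)
  · exact hyx.eq_or_lt.imp id (h y)
  · exact Or.inr (hs hyx hx)

lemma IsLowerSet.diff_singleton_iff {α : Type*} [PartialOrder α] {s : Set α} {a : α}
    (hs : IsLowerSet s) : IsLowerSet (s \ {a}) ↔ ∀ b ∈ s, ¬a < b := by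
  refine ⟨fun h b hb hab => (h hab.le ⟨hb, hab.ne'⟩).2 rfl, fun h => hs.erase fun b hb hab => ?_⟩
  by_contra hne
  exact h b hb (hab.lt_of_ne (Ne.symm hne))

lemma YoungDiagram.exists_cells_eq_iff {s : Finset (ℕ × ℕ)} :
    (∃ ν : YoungDiagram, ν.cells = s) ↔ IsLowerSet (s : Set (ℕ × ℕ)) :=
  ⟨fun ⟨ν, hν⟩ => hν ▸ ν.isLowerSet, fun hs => ⟨⟨s, hs⟩, rfl⟩⟩

section

variable {μ : YoungDiagram}

lemma addable_iff_forall_lt {c : ℕ × ℕ} : Addable μ c ↔ c ∉ μ ∧ ∀ b < c, b ∈ μ := by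
  rw [Addable, YoungDiagram.exists_cells_eq_iff, Finset.coe_insert, μ.isLowerSet.insert_iff]
  rfl

lemma removable_iff_forall_lt {c : ℕ × ℕ} : Removable μ c ↔ c ∈ μ ∧ ∀ b, c < b → b ∉ μ := by
  rw [Removable, YoungDiagram.exists_cells_eq_iff, Finset.coe_erase,
    μ.isLowerSet.diff_singleton_iff]
  exact and_congr_right fun _ => forall_congr' fun _ => imp_not_comm

lemma addable_iff {i j : ℕ} : Addable μ (i, j) ↔ j = μ.rowLen i ∧ ∀ k < i, j < μ.rowLen k := by
  simp only [addable_iff_forall_lt, Prod.forall, Prod.mk_lt_mk, YoungDiagram.mem_iff_lt_rowLen,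
    not_lt]
  constructor
  · rintro ⟨hle, h⟩
    refine ⟨le_antisymm ?_ hle, fun k hk => h k j (Or.inl ⟨hk, le_rfl⟩)⟩
    rcases j with _ | j
    · exact Nat.zero_le _
    · exact h i j (Or.inr ⟨le_rfl, j.lt_succ_self⟩)
  · rintro ⟨rfl, h⟩
    refine ⟨le_rfl, fun k l => ?_⟩
    rintro (⟨hk, hl⟩ | ⟨hk, hl⟩)
    · exact hl.trans_lt (h k hk)
    · exact hl.trans_le (μ.rowLen_anti k i hk)

lemma removable_iff {i j : ℕ} :
    Removable μ (i, j) ↔ j + 1 = μ.rowLen i ∧ μ.rowLen (i + 1) ≤ j := by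
  simp only [removable_iff_forall_lt, Prod.forall, Prod.mk_lt_mk, YoungDiagram.mem_iff_lt_rowLen,
    not_lt]
  constructor
  · rintro ⟨hj, h⟩
    have := h i (j + 1) (Or.inr ⟨le_rfl, j.lt_succ_self⟩)
    exact ⟨by omega, h (i + 1) j (Or.inl ⟨i.lt_succ_self, le_rfl⟩)⟩
  · rintro ⟨hj, h⟩
    refine ⟨by omega, fun k l => ?_⟩
    rintro (⟨hk, hl⟩ | ⟨hk, hl⟩)
    · exact (μ.rowLen_anti _ _ hk).trans (h.trans hl)
    · rcases hk.eq_or_lt with rfl | hk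
      · omega
      · exact ((μ.rowLen_anti _ _ hk).trans h).trans hl.le

lemma addable_zero_rowLen (μ : YoungDiagram) : Addable μ (0, μ.rowLen 0) :=
  addable_iff.2 ⟨rfl, fun _ hk => absurd hk (Nat.not_lt_zero _)⟩

lemma addable_succ_iff {i j : ℕ} :
    Addable μ (i + 1, j) ↔ j = μ.rowLen (i + 1) ∧ j < μ.rowLen i := by
  rw [addable_iff]
  refine and_congr_right fun _ => ⟨fun h => h i i.lt_succ_self, fun h k hk => ?_⟩
  exact h.trans_le (μ.rowLen_anti _ _ (Nat.lt_succ_iff.1 hk))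

lemma removable_iff_addable_succ {i j : ℕ} :
    Removable μ (i, j) ↔ j + 1 = μ.rowLen i ∧ Addable μ (i + 1, μ.rowLen (i + 1)) := by
  rw [removable_iff, addable_succ_iff]
  constructor
  · rintro ⟨hj, h⟩
    exact ⟨hj, rfl, by omega⟩
  · rintro ⟨hj, -, h⟩
    exact ⟨hj, by omega⟩

end

def rowDiag (μ : YoungDiagram) (i : ℕ) : ℤ := diagOf (i, μ.rowLen i)

lemma rowDiag_strictAnti (μ : YoungDiagram) : StrictAnti (rowDiag μ) := fun i k hik => by
  have := μ.rowLen_anti i k hik.le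
  simp only [rowDiag, diagOf]
  omega

lemma exists_addable_rowDiag_le (μ : YoungDiagram) (i : ℕ) :
    ∃ a, Addable μ a ∧ rowDiag μ i ≤ diagOf a := by
  induction i with
  | zero => exact ⟨_, addable_zero_rowLen μ, le_rfl⟩
  | succ i ih =>
    by_cases h : μ.rowLen (i + 1) < μ.rowLen i
    · exact ⟨_, addable_succ_iff.2 ⟨rfl, h⟩, le_rfl⟩
    · obtain ⟨a, ha, hle⟩ := ih
      exact ⟨a, ha, (rowDiag_strictAnti μ i.lt_succ_self).le.trans hle⟩

section

variable {μ : YoungDiagram} {a b : ℕ × ℕ}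

lemma Addable.snd_eq_rowLen (ha : Addable μ a) : a.2 = μ.rowLen a.1 :=
  (addable_iff.1 ha).1

lemma Addable.diagOf_eq (ha : Addable μ a) : diagOf a = rowDiag μ a.1 := by
  rw [rowDiag, ← ha.snd_eq_rowLen]

lemma Addable.exists_removable (ha : Addable μ a) (h0 : a.1 ≠ 0) :
    ∃ r, Removable μ r ∧ r.1 + 1 = a.1 := by
  obtain ⟨i, j⟩ := a
  obtain ⟨i, rfl⟩ := Nat.exists_eq_succ_of_ne_zero h0
  obtain ⟨rfl, hlt⟩ := addable_succ_iff.1 ha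
  exact ⟨(i, μ.rowLen i - 1), removable_iff_addable_succ.2 ⟨by omega, ha⟩, rfl⟩

lemma Removable.snd_add_one_eq_rowLen (hb : Removable μ b) : b.2 + 1 = μ.rowLen b.1 :=
  (removable_iff.1 hb).1

lemma Removable.addable_succ (hb : Removable μ b) : Addable μ (b.1 + 1, μ.rowLen (b.1 + 1)) :=
  (removable_iff_addable_succ.1 hb).2

lemma Removable.diagOf_eq (hb : Removable μ b) : diagOf b = rowDiag μ b.1 - 1 := by
  have := (removable_iff_addable_succ.1 hb).1
  simp only [rowDiag, diagOf]
  omega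

lemma Removable.diagOf_lt_rowDiag (hb : Removable μ b) : diagOf b < rowDiag μ b.1 := by
  rw [hb.diagOf_eq]
  exact sub_one_lt _

lemma Removable.rowDiag_succ_lt (hb : Removable μ b) : rowDiag μ (b.1 + 1) < diagOf b := by
  have := (removable_iff.1 hb).2
  simp only [rowDiag, diagOf]
  omega

/-- `rowDiag μ (b.1 + 1)` is the diagonal of `hb.addable_succ`: it is the nearest addable square
below `b`. -/
lemma Removable.diagOf_le_of_addable (hb : Removable μ b) (ha : Addable μ a)
    (h : diagOf a < diagOf b) : diagOf a ≤ rowDiag μ (b.1 + 1) := by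
  rw [ha.diagOf_eq] at h ⊢
  have hrow : b.1 < a.1 := (rowDiag_strictAnti μ).lt_iff_gt.1 (h.trans hb.diagOf_lt_rowDiag)
  exact (rowDiag_strictAnti μ).antitone hrow

lemma diagOf_ne_of_addable_of_removable (ha : Addable μ a) (hb : Removable μ b) :
    diagOf a ≠ diagOf b := by
  rw [ha.diagOf_eq]
  rcases le_or_gt a.1 b.1 with hab | hab
  · exact (hb.diagOf_lt_rowDiag.trans_le ((rowDiag_strictAnti μ).antitone hab)).ne'
  · exact (((rowDiag_strictAnti μ).antitone hab).trans_lt hb.rowDiag_succ_lt).ne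

lemma existsUnique_removable_between (ha : Addable μ a) (hb : Addable μ b)
    (hab : diagOf a < diagOf b)
    (hnone : ∀ c, Addable μ c → ¬(diagOf a < diagOf c ∧ diagOf c < diagOf b)) :
    ∃! k : ℤ, (∃ c, Removable μ c ∧ diagOf c = k) ∧ diagOf a < k ∧ k < diagOf b := by
  have hD := rowDiag_strictAnti μ
  have hrow : b.1 < a.1 := by
    rw [ha.diagOf_eq, hb.diagOf_eq] at hab
    exact hD.lt_iff_gt.1 hab
  obtain ⟨r, hr, hra⟩ := ha.exists_removable (Nat.ne_zero_of_lt hrow)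
  refine ⟨diagOf r, ⟨⟨r, hr, rfl⟩, ?_, ?_⟩, ?_⟩
  · rw [ha.diagOf_eq, ← hra]
    exact hr.rowDiag_succ_lt
  · rw [hb.diagOf_eq]
    exact hr.diagOf_lt_rowDiag.trans_le (hD.antitone (by omega))
  · rintro _ ⟨⟨r', hr', rfl⟩, har', hr'b⟩
    have hbelow : rowDiag μ (r'.1 + 1) = diagOf a := by
      by_contra hne
      exact hnone _ hr'.addable_succ
        ⟨(hr'.diagOf_le_of_addable ha har').lt_of_ne' hne, hr'.rowDiag_succ_lt.trans hr'b⟩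
    have hrow' : r'.1 = r.1 := by
      rw [ha.diagOf_eq, ← hra] at hbelow
      exact Nat.succ_injective (hD.injective hbelow)
    rw [hr'.diagOf_eq, hr.diagOf_eq, hrow']

end

lemma diagOf_injOn_addable (μ : YoungDiagram) : Set.InjOn diagOf {c | Addable μ c} := by
  intro a (ha : Addable μ a) b (hb : Addable μ b) h
  have hrow : a.1 = b.1 :=
    (rowDiag_strictAnti μ).injective (by rw [← ha.diagOf_eq, ← hb.diagOf_eq, h])
  exact Prod.ext hrow (by rw [ha.snd_eq_rowLen, hb.snd_eq_rowLen, hrow])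

lemma diagOf_injOn_removable (μ : YoungDiagram) : Set.InjOn diagOf {c | Removable μ c} := by
  intro a (ha : Removable μ a) b (hb : Removable μ b) h
  have hrow : a.1 = b.1 :=
    (rowDiag_strictAnti μ).injective (by linarith [ha.diagOf_eq, hb.diagOf_eq])
  have := ha.snd_add_one_eq_rowLen
  have := hb.snd_add_one_eq_rowLen
  exact Prod.ext hrow (by rw [hrow] at *; omega)

/-- Addable and removable squares of a Young diagram lie on distinct diagonals and are
perfectly interleaved, with addable squares at both extremes. -/
theorem stmt1 (μ : YoungDiagram) :
    Set.InjOn diagOf {c | Addable μ c} ∧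
    Set.InjOn diagOf {c | Removable μ c} ∧
    (∀ a b, Addable μ a → Removable μ b → diagOf a ≠ diagOf b) ∧
    (∀ a b, Addable μ a → Addable μ b → diagOf a < diagOf b →
      (∀ c, Addable μ c → ¬(diagOf a < diagOf c ∧ diagOf c < diagOf b)) →
      ∃! k : ℤ, (∃ c, Removable μ c ∧ diagOf c = k) ∧ diagOf a < k ∧ k < diagOf b) ∧
    (∀ b, Removable μ b →
      (∃ a, Addable μ a ∧ diagOf a < diagOf b) ∧ (∃ a, Addable μ a ∧ diagOf b < diagOf a)) := by
  refine ⟨diagOf_injOn_addable μ, diagOf_injOn_removable μ,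
    fun _ _ => diagOf_ne_of_addable_of_removable,
    fun _ _ => existsUnique_removable_between, fun b hb => ⟨?_, ?_⟩⟩
  · exact ⟨_, hb.addable_succ, hb.rowDiag_succ_lt⟩
  · obtain ⟨a, ha, hle⟩ := exists_addable_rowDiag_le μ b.1
    exact ⟨a, ha, hb.diagOf_lt_rowDiag.trans_le hle⟩
end

section
/- For partitions λ ⊆ μ, the skew shape μ/λ is a horizontal strip (at most one square in each column) if and only if edge(λ) can be transformed into edge(μ) by a finite sequence of replacements of a substring '10' by '01', performed at strictly left-to-right positions (with overlap allowed, i.e., the bit 1 written by one replacement may participate in the next replacement). -/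
open scoped Classical

/-- A partition: a weakly decreasing, eventually zero function `ℕ → ℕ`. -/
def IsPartition (f : ℕ → ℕ) : Prop :=
  (∀ i j : ℕ, i ≤ j → f j ≤ f i) ∧ ∃ N : ℕ, ∀ n : ℕ, N ≤ n → f n = 0

/-- The edge sequence of a partition: bit `1` exactly at the positions `f j - j - 1`
(for `j : ℕ`); it is eventually `1` to the left and `0` to the right, and adding a
square on diagonal `k` replaces the substring `10` at positions `(k-1, k)` by `01`. -/
noncomputable def edgeSeq (f : ℕ → ℕ) (k : ℤ) : ℕ :=
  if ∃ j : ℕ, (f j : ℤ) - (j : ℤ) - 1 = k then 1 else 0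

noncomputable def aSeq (f : ℕ → ℕ) (j : ℕ) : ℤ := (f j : ℤ) - (j : ℤ) - 1

lemma edgeSeq_eq (f : ℕ → ℕ) (k : ℤ) :
    edgeSeq f k = if ∃ j : ℕ, aSeq f j = k then 1 else 0 := rfl

lemma aSeq_lt (f : ℕ → ℕ) (hf : ∀ i j : ℕ, i ≤ j → f j ≤ f i) {i j : ℕ} (h : i < j) :
    aSeq f j < aSeq f i := by
  have := hf i j h.le; unfold aSeq; omega

lemma aSeq_le (f : ℕ → ℕ) (hf : ∀ i j : ℕ, i ≤ j → f j ≤ f i) {i j : ℕ} (h : i ≤ j) :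
    aSeq f j ≤ aSeq f i := by
  have := hf i j h; unfold aSeq; omega

section Forward

variable (f g : ℕ → ℕ) (M : ℕ)

/-- number of squares added in row `j`. -/
def dF (j : ℕ) : ℕ := g j - f j

/-- number of moves performed before the block of row `j`. -/
def SF (j : ℕ) : ℕ := ∑ i ∈ Finset.Ico (j+1) M, dF f g i

/-- total number of moves. -/
def NF : ℕ := ∑ i ∈ Finset.range M, dF f g i

/-- position of particle `j` after `t` moves. -/
noncomputable def posF (t j : ℕ) : ℤ :=
  aSeq f j + ((min (dF f g j) (t - SF f g M j) : ℕ) : ℤ)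

variable {f g M}
variable (hfmono : ∀ i j : ℕ, i ≤ j → f j ≤ f i) (hgmono : ∀ i j : ℕ, i ≤ j → g j ≤ g i)
  (hsub : ∀ i, f i ≤ g i) (hgM : ∀ n, M ≤ n → g n = 0)
  (hstrip : ∀ i, g (i + 1) ≤ f i)

include hgM in
lemma dF_eq_zero {j : ℕ} (h : M ≤ j) : dF f g j = 0 := by
  unfold dF; rw [hgM j h]; omega

lemma SF_eq_zero {j : ℕ} (h : M ≤ j) : SF f g M j = 0 := by
  unfold SF; rw [Finset.Ico_eq_empty (by omega), Finset.sum_empty]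

lemma SF_add {j j' : ℕ} (h : j < j') (h' : j' < M) :
    dF f g j' + SF f g M j' ≤ SF f g M j := by
  unfold SF
  rw [← Finset.sum_eq_sum_Ico_succ_bot (show j' < M from h') (dF f g)]
  exact Finset.sum_le_sum_of_subset (Finset.Ico_subset_Ico (by omega) le_rfl)

lemma NF_ge {j : ℕ} (h : j < M) : dF f g j + SF f g M j ≤ NF f g M := by
  unfold NF SF
  rw [Finset.range_eq_Ico, ← Finset.sum_eq_sum_Ico_succ_bot (show j < M from h) (dF f g)]
  exact Finset.sum_le_sum_of_subset (Finset.Ico_subset_Ico (by omega) le_rfl)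

include hsub in
lemma b_eq (j : ℕ) : aSeq g j = aSeq f j + (dF f g j : ℤ) := by
  have := hsub j; unfold aSeq dF; push_cast; omega

include hstrip in
lemma strip' (j : ℕ) : aSeq g (j+1) < aSeq f j := by
  have := hstrip j; unfold aSeq; push_cast; omega

lemma pos_lb (t j : ℕ) : aSeq f j ≤ posF f g M t j := by
  unfold posF
  have : (0:ℤ) ≤ ((min (dF f g j) (t - SF f g M j) : ℕ) : ℤ) := Int.ofNat_nonneg _
  omega

include hsub in
lemma pos_ub (t j : ℕ) : posF f g M t j ≤ aSeq g j := by
  rw [b_eq hsub j]; unfold posF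
  have : min (dF f g j) (t - SF f g M j) ≤ dF f g j := min_le_left _ _
  omega

include hsub hgmono hstrip in
lemma pos_anti (t t' : ℕ) {j j' : ℕ} (h : j < j') : posF f g M t' j' < posF f g M t j := by
  calc posF f g M t' j' ≤ aSeq g j' := pos_ub hsub t' j'
    _ ≤ aSeq g (j+1) := aSeq_le g hgmono h
    _ < aSeq f j := strip' hstrip j
    _ ≤ posF f g M t j := pos_lb t j

lemma pos_zero (j : ℕ) : posF f g M 0 j = aSeq f j := by
  unfold posF
  have : (0 : ℕ) - SF f g M j = 0 := by omega
  rw [this]; simp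

include hsub hgM in
lemma pos_last {t j : ℕ} (ht : NF f g M ≤ t) : posF f g M t j = aSeq g j := by
  rw [b_eq hsub j]; unfold posF
  rcases lt_or_ge j M with h | h
  · have h1 := NF_ge (f := f) (g := g) h
    have : min (dF f g j) (t - SF f g M j) = dF f g j := by omega
    rw [this]
  · rw [dF_eq_zero hgM h]; simp

/-- existence of the block index for `t < NF`. -/
lemma exJ {t : ℕ} (ht : t < NF f g M) :
    ∃ j0, SF f g M j0 ≤ t ∧ t < SF f g M j0 + dF f g j0 := by
  have hM : 0 < M := by
    by_contra h
    have hM0 : M = 0 := by omega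
    have : NF f g M = 0 := by unfold NF; rw [hM0]; simp
    omega
  have hex : ∃ j, SF f g M j ≤ t := ⟨M, by rw [SF_eq_zero le_rfl]; omega⟩
  classical
  let j0 := Nat.find hex
  refine ⟨j0, Nat.find_spec hex, ?_⟩
  rcases Nat.eq_zero_or_pos j0 with h0 | h0
  · have : SF f g M 0 + dF f g 0 = NF f g M := by
      unfold NF SF
      rw [Finset.range_eq_Ico, Finset.sum_eq_sum_Ico_succ_bot (show 0 < M from hM) (dF f g)]
      omega
    have h1 : SF f g M j0 = SF f g M 0 := by rw [h0]
    have h2 : dF f g j0 = dF f g 0 := by rw [h0]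
    omega
  · obtain ⟨k, hk⟩ : ∃ k, j0 = k + 1 := ⟨j0 - 1, by omega⟩
    have hkt : t < SF f g M k := by
      have := Nat.find_min hex (m := k) (by omega)
      omega
    have hkM : k + 1 < M := by
      by_contra h
      have : SF f g M k = 0 := by
        unfold SF; rw [Finset.Ico_eq_empty (by omega), Finset.sum_empty]
      omega
    have : SF f g M k = dF f g (k+1) + SF f g M (k+1) := by
      unfold SF; rw [Finset.sum_eq_sum_Ico_succ_bot (show k+1 < M from hkM) (dF f g)]
    rw [hk]; omega

include hgM in
lemma j0_lt_M {t j0 : ℕ} (hJ2 : t < SF f g M j0 + dF f g j0) : j0 < M := by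
  by_contra h
  rw [SF_eq_zero (by omega), dF_eq_zero hgM (by omega)] at hJ2
  omega

lemma pos_block {t j0 : ℕ} (hJ1 : SF f g M j0 ≤ t) (hJ2 : t < SF f g M j0 + dF f g j0) :
    posF f g M t j0 = aSeq f j0 + ((t - SF f g M j0 : ℕ) : ℤ) := by
  unfold posF
  have : min (dF f g j0) (t - SF f g M j0) = t - SF f g M j0 := by omega
  rw [this]

include hsub in
lemma pos_block_ub {t j0 : ℕ} (hJ1 : SF f g M j0 ≤ t) (hJ2 : t < SF f g M j0 + dF f g j0) :
    posF f g M t j0 + 1 ≤ aSeq g j0 := by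
  rw [pos_block hJ1 hJ2, b_eq hsub j0]
  have h1 : t - SF f g M j0 + 1 ≤ dF f g j0 := by omega
  omega

lemma pos_step_self {t j0 : ℕ} (hJ1 : SF f g M j0 ≤ t) (hJ2 : t < SF f g M j0 + dF f g j0) :
    posF f g M (t+1) j0 = posF f g M t j0 + 1 := by
  unfold posF
  have h1 : min (dF f g j0) (t - SF f g M j0) = t - SF f g M j0 := by omega
  have h2 : min (dF f g j0) (t + 1 - SF f g M j0) = t - SF f g M j0 + 1 := by omega
  rw [h1, h2]; push_cast; ring

include hgM in
lemma pos_step_other {t j0 : ℕ} (hJ1 : SF f g M j0 ≤ t) (hJ2 : t < SF f g M j0 + dF f g j0)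
    {j : ℕ} (hj : j ≠ j0) : posF f g M (t+1) j = posF f g M t j := by
  have hj0M : j0 < M := j0_lt_M hgM hJ2
  unfold posF
  rcases lt_or_gt_of_ne hj with h | h
  · have h1 : dF f g j0 + SF f g M j0 ≤ SF f g M j := SF_add h hj0M
    have h2 : t + 1 - SF f g M j = 0 := by omega
    have h3 : t - SF f g M j = 0 := by omega
    rw [h2, h3]
  · rcases lt_or_ge j M with hjM | hjM
    · have h1 : dF f g j + SF f g M j ≤ SF f g M j0 := SF_add h hjM
      have h2 : min (dF f g j) (t + 1 - SF f g M j) = dF f g j := by omega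
      have h3 : min (dF f g j) (t - SF f g M j) = dF f g j := by omega
      rw [h2, h3]
    · rw [dF_eq_zero hgM hjM]; simp

include hgM in
lemma J_anti {t t' j0 j0' : ℕ} (htt : t ≤ t')
    (hJ1 : SF f g M j0 ≤ t) (hJ2 : t < SF f g M j0 + dF f g j0)
    (hJ1' : SF f g M j0' ≤ t') (hJ2' : t' < SF f g M j0' + dF f g j0') : j0' ≤ j0 := by
  by_contra h
  have h1 : dF f g j0' + SF f g M j0' ≤ SF f g M j0 := SF_add (by omega) (j0_lt_M hgM hJ2')
  omega

include hsub hgmono hstrip hgM in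
lemma p_mono {t t' j0 j0' : ℕ} (htt : t < t')
    (hJ1 : SF f g M j0 ≤ t) (hJ2 : t < SF f g M j0 + dF f g j0)
    (hJ1' : SF f g M j0' ≤ t') (hJ2' : t' < SF f g M j0' + dF f g j0') :
    posF f g M t j0 < posF f g M t' j0' := by
  have hle : j0' ≤ j0 := J_anti hgM htt.le hJ1 hJ2 hJ1' hJ2'
  rcases eq_or_lt_of_le hle with he | hlt
  · subst he
    rw [pos_block hJ1 hJ2, pos_block hJ1' hJ2']
    have : t - SF f g M j0' < t' - SF f g M j0' := by omega
    omega
  · calc posF f g M t j0 < aSeq g j0 := by have := pos_block_ub hsub hJ1 hJ2; omega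
      _ ≤ aSeq g (j0' + 1) := aSeq_le g hgmono (by omega)
      _ < aSeq f j0' := strip' hstrip j0'
      _ ≤ posF f g M t' j0' := pos_lb t' j0'

include hgmono hstrip in
lemma b_lt_a {j j0 : ℕ} (h : j < j0) : aSeq g j0 < aSeq f j :=
  lt_of_le_of_lt (aSeq_le g hgmono (by omega)) (strip' hstrip j)

include hsub hgmono hstrip in
lemma pos_ne_add_one {t j0 : ℕ} (hJ1 : SF f g M j0 ≤ t) (hJ2 : t < SF f g M j0 + dF f g j0)
    (j : ℕ) : posF f g M t j ≠ posF f g M t j0 + 1 := by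
  rcases lt_trichotomy j j0 with h | h | h
  · have h1 : aSeq g j0 < aSeq f j := b_lt_a hgmono hstrip h
    have h2 := pos_lb (f := f) (g := g) (M := M) t j
    have h3 := pos_block_ub hsub hJ1 hJ2
    omega
  · subst h; omega
  · have h1 : posF f g M t j ≤ aSeq g j := pos_ub hsub t j
    have h2 : aSeq g j ≤ aSeq g (j0+1) := aSeq_le g hgmono (by omega)
    have h3 : aSeq g (j0+1) < aSeq f j0 := strip' hstrip j0
    have h4 := pos_lb (f := f) (g := g) (M := M) t j0
    omega

include hsub hgmono hgM hstrip in
lemma pos_succ_ne {t j0 : ℕ} (hJ1 : SF f g M j0 ≤ t) (hJ2 : t < SF f g M j0 + dF f g j0)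
    (j : ℕ) : posF f g M (t+1) j ≠ posF f g M t j0 := by
  rcases lt_trichotomy j j0 with h | h | h
  · rw [pos_step_other hgM hJ1 hJ2 (by omega)]
    have h1 : aSeq g j0 < aSeq f j := b_lt_a hgmono hstrip h
    have h2 := pos_lb (f := f) (g := g) (M := M) t j
    have h3 := pos_block_ub hsub hJ1 hJ2
    omega
  · subst h; rw [pos_step_self hJ1 hJ2]; omega
  · rw [pos_step_other hgM hJ1 hJ2 (by omega)]
    have h1 : posF f g M t j ≤ aSeq g j := pos_ub hsub t j
    have h2 : aSeq g j ≤ aSeq g (j0+1) := aSeq_le g hgmono (by omega)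
    have h3 : aSeq g (j0+1) < aSeq f j0 := strip' hstrip j0
    have h4 := pos_lb (f := f) (g := g) (M := M) t j0
    omega

end Forward

theorem forward_dir (f g : ℕ → ℕ) (hf : IsPartition f) (hg : IsPartition g)
    (hsub : ∀ i, f i ≤ g i) (hstrip : ∀ i, g (i + 1) ≤ f i) :
    ∃ (N : ℕ) (c : Fin (N + 1) → ℤ → ℕ) (p : Fin N → ℤ),
      c 0 = edgeSeq f ∧ c (Fin.last N) = edgeSeq g ∧ StrictMono p ∧
      ∀ i : Fin N,
        c i.castSucc (p i) = 1 ∧ c i.castSucc (p i + 1) = 0 ∧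
        c i.succ (p i) = 0 ∧ c i.succ (p i + 1) = 1 ∧
        ∀ j : ℤ, j ≠ p i → j ≠ p i + 1 → c i.succ j = c i.castSucc j := by
  obtain ⟨hfmono, Kf, hKf⟩ := hf
  obtain ⟨hgmono, Kg, hKg⟩ := hg
  set M := max Kf Kg with hMdef
  have hgM : ∀ n, M ≤ n → g n = 0 := fun n hn => hKg n (le_trans (le_max_right _ _) hn)
  have hJex : ∀ t : Fin (NF f g M), ∃ j0, SF f g M j0 ≤ t.1 ∧ t.1 < SF f g M j0 + dF f g j0 :=
    fun t => exJ t.isLt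
  choose J hJ1 hJ2 using hJex
  refine ⟨NF f g M, fun t x => if ∃ j, posF f g M t.1 j = x then 1 else 0,
    fun t => posF f g M t.1 (J t), ?_, ?_, ?_, ?_⟩
  · funext x
    have h0 : ∀ j, posF f g M ((0 : Fin (NF f g M + 1)) : ℕ) j = aSeq f j := by
      intro j; rw [Fin.val_zero]; exact pos_zero j
    simp only [h0]
    rw [edgeSeq_eq]
  · funext x
    have h0 : ∀ j, posF f g M ((Fin.last (NF f g M)) : ℕ) j = aSeq g j := by
      intro j; rw [Fin.val_last]; exact pos_last hsub hgM le_rfl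
    simp only [h0]
    rw [edgeSeq_eq]
  · intro t t' htt
    exact p_mono hgmono hsub hgM hstrip htt (hJ1 t) (hJ2 t) (hJ1 t') (hJ2 t')
  · intro i
    have e1 : (i.castSucc : ℕ) = (i : ℕ) := Fin.coe_castSucc i
    have e2 : (i.succ : ℕ) = (i : ℕ) + 1 := Fin.val_succ i
    refine ⟨?_, ?_, ?_, ?_, ?_⟩
    · simp only [e1]
      exact if_pos ⟨J i, rfl⟩
    · simp only [e1]
      refine if_neg ?_
      rintro ⟨j, hj⟩
      exact pos_ne_add_one hgmono hsub hstrip (hJ1 i) (hJ2 i) j hj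
    · simp only [e2]
      refine if_neg ?_
      rintro ⟨j, hj⟩
      exact pos_succ_ne hgmono hsub hgM hstrip (hJ1 i) (hJ2 i) j hj
    · simp only [e2]
      exact if_pos ⟨J i, pos_step_self (hJ1 i) (hJ2 i)⟩
    · intro x hx1 hx2
      simp only [e1, e2]
      refine if_congr ?_ rfl rfl
      constructor
      · rintro ⟨j, hj⟩
        by_cases hjj : j = J i
        · exfalso
          subst hjj
          rw [pos_step_self (hJ1 i) (hJ2 i)] at hj
          exact hx2 hj.symm
        · exact ⟨j, by rwa [pos_step_other hgM (hJ1 i) (hJ2 i) hjj] at hj⟩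
      · rintro ⟨j, hj⟩
        by_cases hjj : j = J i
        · exfalso
          subst hjj
          exact hx1 hj.symm
        · exact ⟨j, by rwa [pos_step_other hgM (hJ1 i) (hJ2 i) hjj]⟩

lemma edge_ne_zero_iff (f : ℕ → ℕ) (y : ℤ) : edgeSeq f y ≠ 0 ↔ ∃ j, aSeq f j = y := by
  rw [edgeSeq_eq]; split_ifs with h
  · simpa using h
  · simpa using h

lemma edge_one (f : ℕ → ℕ) {j : ℕ} {x : ℤ} (h : aSeq f j = x) : edgeSeq f x = 1 := by
  rw [edgeSeq_eq, if_pos ⟨j, h⟩]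

lemma finOnes (f : ℕ → ℕ) (K : ℕ) (hK : ∀ n, K ≤ n → f n = 0) (x : ℤ) :
    {y : ℤ | x ≤ y ∧ edgeSeq f y ≠ 0}.Finite := by
  apply Set.Finite.subset ((Set.finite_Iio (max K ((-1 - x).toNat + 1))).image (aSeq f))
  rintro y ⟨hxy, hy⟩
  obtain ⟨j, hj⟩ := (edge_ne_zero_iff f y).mp hy
  refine ⟨j, ?_, hj⟩
  simp only [Set.mem_Iio]
  rcases lt_or_ge j K with h | h
  · omega
  · have hfj : f j = 0 := hK j h
    have : aSeq f j = -(j : ℤ) - 1 := by unfold aSeq; rw [hfj]; push_cast; ring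
    omega

lemma card_le_imp (f : ℕ → ℕ) (hfmono : ∀ i j : ℕ, i ≤ j → f j ≤ f i) (x : ℤ) (i : ℕ)
    (h : i + 1 ≤ {y : ℤ | x ≤ y ∧ edgeSeq f y ≠ 0}.ncard) : x ≤ aSeq f i := by
  by_contra hx
  push_neg at hx
  have hsub : {y : ℤ | x ≤ y ∧ edgeSeq f y ≠ 0} ⊆ ↑((Finset.range i).image (aSeq f)) := by
    rintro y ⟨hxy, hy⟩
    obtain ⟨j, hj⟩ := (edge_ne_zero_iff f y).mp hy
    simp only [Finset.coe_image, Finset.coe_range, Set.mem_image, Set.mem_Iio]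
    refine ⟨j, ?_, hj⟩
    by_contra hji
    have : aSeq f j ≤ aSeq f i := aSeq_le f hfmono (by omega)
    omega
  have h1 := Set.ncard_le_ncard hsub (Finset.finite_toSet _)
  rw [Set.ncard_coe_finset] at h1
  have h2 := Finset.card_image_le (s := Finset.range i) (f := aSeq f)
  rw [Finset.card_range] at h2
  omega

lemma card_ge (g : ℕ → ℕ) (hgmono : ∀ i j : ℕ, i ≤ j → g j ≤ g i) (K : ℕ)
    (hK : ∀ n, K ≤ n → g n = 0) (i : ℕ) :
    i + 2 ≤ {y : ℤ | aSeq g (i+1) ≤ y ∧ edgeSeq g y ≠ 0}.ncard := by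
  have hanti : StrictAnti (aSeq g) := strictAnti_nat_of_succ_lt (fun n => aSeq_lt g hgmono (by omega))
  have hsub : ↑((Finset.range (i+2)).image (aSeq g)) ⊆ {y : ℤ | aSeq g (i+1) ≤ y ∧ edgeSeq g y ≠ 0} := by
    rintro y hy
    simp only [Finset.coe_image, Finset.coe_range, Set.mem_image, Set.mem_Iio] at hy
    obtain ⟨j, hj, hjy⟩ := hy
    exact ⟨by rw [← hjy]; exact aSeq_le g hgmono (by omega),
      (edge_ne_zero_iff g y).mpr ⟨j, hjy⟩⟩
  have h1 := Set.ncard_le_ncard hsub (finOnes g K hK _)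
  rw [Set.ncard_coe_finset, Finset.card_image_of_injective _ hanti.injective,
    Finset.card_range] at h1
  exact h1

theorem backward_dir (f g : ℕ → ℕ) (hf : IsPartition f) (hg : IsPartition g)
    (hsub : ∀ i, f i ≤ g i)
    (h : ∃ (N : ℕ) (c : Fin (N + 1) → ℤ → ℕ) (p : Fin N → ℤ),
      c 0 = edgeSeq f ∧ c (Fin.last N) = edgeSeq g ∧ StrictMono p ∧
      ∀ i : Fin N,
        c i.castSucc (p i) = 1 ∧ c i.castSucc (p i + 1) = 0 ∧
        c i.succ (p i) = 0 ∧ c i.succ (p i + 1) = 1 ∧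
        ∀ j : ℤ, j ≠ p i → j ≠ p i + 1 → c i.succ j = c i.castSucc j) :
    ∀ i, g (i + 1) ≤ f i := by
  obtain ⟨hfmono, Kf, hKf⟩ := hf
  obtain ⟨hgmono, Kg, hKg⟩ := hg
  obtain ⟨N, c, p, h0, hN, hmono, hmove⟩ := h
  have stepEq : ∀ (i : Fin N) (x : ℤ), x ≠ p i → x ≠ p i + 1 →
      c i.succ x = c i.castSucc x := fun i x hx1 hx2 => (hmove i).2.2.2.2 x hx1 hx2
  -- constancy on untouched intervals
  have constB : ∀ (x : ℤ) (s t : ℕ) (hs : s ≤ t) (ht : t ≤ N),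
      (∀ i : Fin N, s ≤ i.1 → i.1 < t → x ≠ p i ∧ x ≠ p i + 1) →
      c ⟨s, by omega⟩ x = c ⟨t, by omega⟩ x := by
    intro x s t hs
    induction t, hs using Nat.le_induction with
    | base => intro _ _; rfl
    | succ t hst ih =>
      intro ht hint
      have htN : t < N := by omega
      have e1 : (⟨t, by omega⟩ : Fin (N + 1)) = (⟨t, htN⟩ : Fin N).castSucc := rfl
      have e2 : (⟨t + 1, by omega⟩ : Fin (N + 1)) = (⟨t, htN⟩ : Fin N).succ := rfl
      calc c ⟨s, by omega⟩ x = c ⟨t, by omega⟩ x :=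
            ih (by omega) (fun i h1 h2 => hint i h1 (by omega))
        _ = c ⟨t + 1, by omega⟩ x := by
            rw [e1, e2]
            exact (stepEq ⟨t, htN⟩ x (hint ⟨t, htN⟩ (by simp; omega) (by simp)).1
              (hint ⟨t, htN⟩ (by simp; omega) (by simp)).2).symm
  -- a position that is ever a move position has final bit 0
  have hgP : ∀ (i' : Fin N) (x : ℤ), p i' = x → edgeSeq g x = 0 := by
    intro i' x hp
    have h1 : c i'.succ x = 0 := by rw [← hp]; exact (hmove i').2.2.1
    have e2 : (⟨i'.1 + 1, by omega⟩ : Fin (N + 1)) = i'.succ := rfl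
    have h2 : c ⟨i'.1 + 1, by omega⟩ x = c ⟨N, by omega⟩ x := by
      apply constB x (i'.1 + 1) N (by omega) le_rfl
      intro i hi1 _
      have : p i' < p i := hmono (show i' < i from Fin.lt_def.mpr (by omega))
      constructor <;> omega
    have e3 : (⟨N, by omega⟩ : Fin (N + 1)) = Fin.last N := rfl
    rw [← hN, ← e3, ← h2, e2, h1]
  -- a position just right of a move position, never itself a move position, has initial bit 0
  have hfP : ∀ (i : Fin N) (x : ℤ), p i = x - 1 → edgeSeq f x = 0 := by
    intro i x hp
    have h1 : c i.castSucc x = 0 := by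
      have : x = p i + 1 := by omega
      rw [this]; exact (hmove i).2.1
    have e1 : (⟨i.1, by omega⟩ : Fin (N + 1)) = i.castSucc := rfl
    have h2 : c ⟨0, by omega⟩ x = c ⟨i.1, by omega⟩ x := by
      apply constB x 0 i.1 (by omega) (by omega)
      intro i'' _ hi2
      have : p i'' < p i := hmono (show i'' < i from hi2)
      constructor <;> omega
    have e0 : (⟨0, by omega⟩ : Fin (N + 1)) = 0 := rfl
    rw [← h0, ← e0, h2, e1, h1]
  -- finiteness of the set of ones to the right of x at every time
  have hfin : ∀ (t : Fin (N + 1)) (x : ℤ), {y : ℤ | x ≤ y ∧ c t y ≠ 0}.Finite := by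
    intro t
    induction t using Fin.induction with
    | zero =>
      intro x
      rw [h0]
      exact finOnes f Kf hKf x
    | succ i ih =>
      intro x
      have hsub2 : {y : ℤ | x ≤ y ∧ c i.succ y ≠ 0} ⊆
          {y : ℤ | x ≤ y ∧ c i.castSucc y ≠ 0} ∪ {p i, p i + 1} := by
        rintro y ⟨h1, h2⟩
        by_cases hy1 : y = p i
        · exact Or.inr (by simp [hy1])
        by_cases hy2 : y = p i + 1
        · exact Or.inr (by simp [hy2])
        · exact Or.inl ⟨h1, by rwa [← stepEq i y hy1 hy2]⟩
      exact Set.Finite.subset ((ih x).union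
        ((Set.finite_singleton (p i + 1)).insert (p i))) hsub2
  -- one-step count identity
  have hstep : ∀ (i : Fin N) (x : ℤ),
      {y : ℤ | x ≤ y ∧ c i.succ y ≠ 0}.ncard =
      {y : ℤ | x ≤ y ∧ c i.castSucc y ≠ 0}.ncard + (if p i = x - 1 then 1 else 0) := by
    intro i x
    have hc1 : c i.castSucc (p i) = 1 := (hmove i).1
    have hc2 : c i.castSucc (p i + 1) = 0 := (hmove i).2.1
    have hc3 : c i.succ (p i) = 0 := (hmove i).2.2.1
    have hc4 : c i.succ (p i + 1) = 1 := (hmove i).2.2.2.1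
    have hfinS := hfin i.castSucc x
    rcases le_or_gt x (p i) with hA | hA
    · -- exchange
      have hset : {y : ℤ | x ≤ y ∧ c i.succ y ≠ 0} =
          insert (p i + 1) ({y : ℤ | x ≤ y ∧ c i.castSucc y ≠ 0} \ {p i}) := by
        ext y
        simp only [Set.mem_insert_iff, Set.mem_diff, Set.mem_setOf_eq, Set.mem_singleton_iff]
        constructor
        · rintro ⟨hy1, hy2⟩
          by_cases hyp : y = p i + 1
          · exact Or.inl hyp
          · have hyp' : y ≠ p i := fun he => by rw [he, hc3] at hy2; exact hy2 rfl
            exact Or.inr ⟨⟨hy1, by rwa [← stepEq i y hyp' hyp]⟩, hyp'⟩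
        · rintro (rfl | ⟨⟨hy1, hy2⟩, hy3⟩)
          · exact ⟨by omega, by rw [hc4]; omega⟩
          · refine ⟨hy1, ?_⟩
            by_cases hyp : y = p i + 1
            · rw [hyp, hc4]; omega
            · rwa [stepEq i y hy3 hyp]
      have hnotmem : p i + 1 ∉ {y : ℤ | x ≤ y ∧ c i.castSucc y ≠ 0} := by
        intro hmem
        exact hmem.2 (by rw [hc2])
      have hmem : p i ∈ {y : ℤ | x ≤ y ∧ c i.castSucc y ≠ 0} := ⟨hA, by rw [hc1]; omega⟩
      rw [hset, Set.ncard_exchange hnotmem hmem, if_neg (by omega)]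
      omega
    rcases eq_or_lt_of_le (show p i + 1 ≤ x by omega) with hB | hB
    · -- insert
      have hset : {y : ℤ | x ≤ y ∧ c i.succ y ≠ 0} =
          insert x {y : ℤ | x ≤ y ∧ c i.castSucc y ≠ 0} := by
        ext y
        simp only [Set.mem_insert_iff, Set.mem_setOf_eq]
        constructor
        · rintro ⟨hy1, hy2⟩
          by_cases hyp : y = x
          · exact Or.inl hyp
          · have hyp1 : y ≠ p i := by omega
            have hyp2 : y ≠ p i + 1 := by omega
            exact Or.inr ⟨hy1, by rwa [← stepEq i y hyp1 hyp2]⟩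
        · rintro (rfl | ⟨hy1, hy2⟩)
          · exact ⟨le_rfl, by rw [← hB, hc4]; omega⟩
          · refine ⟨hy1, ?_⟩
            by_cases hyp : y = p i + 1
            · rw [hyp, hc4]; omega
            · rwa [stepEq i y (by omega) hyp]
      have hnotmem : x ∉ {y : ℤ | x ≤ y ∧ c i.castSucc y ≠ 0} := by
        intro hmem
        exact hmem.2 (by rw [← hB, hc2])
      rw [hset, Set.ncard_insert_of_notMem hnotmem hfinS, if_pos (by omega)]
    · -- unchanged
      have hset : {y : ℤ | x ≤ y ∧ c i.succ y ≠ 0} =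
          {y : ℤ | x ≤ y ∧ c i.castSucc y ≠ 0} := by
        ext y
        simp only [Set.mem_setOf_eq]
        constructor
        · rintro ⟨hy1, hy2⟩
          exact ⟨hy1, by rwa [← stepEq i y (by omega) (by omega)]⟩
        · rintro ⟨hy1, hy2⟩
          exact ⟨hy1, by rwa [stepEq i y (by omega) (by omega)]⟩
      rw [hset, if_neg (by omega)]
      omega
  -- total count identity
  have htot : ∀ (t : ℕ) (ht : t ≤ N) (x : ℤ),
      {y : ℤ | x ≤ y ∧ c ⟨t, by omega⟩ y ≠ 0}.ncard =
      {y : ℤ | x ≤ y ∧ c 0 y ≠ 0}.ncard +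
        (if ∃ i : Fin N, i.1 < t ∧ p i = x - 1 then 1 else 0) := by
    intro t
    induction t with
    | zero =>
      intro _ x
      rw [if_neg (by rintro ⟨i, hi, _⟩; omega)]
      rfl
    | succ t ih =>
      intro ht x
      have htN : t < N := by omega
      have e2 : (⟨t + 1, by omega⟩ : Fin (N + 1)) = (⟨t, htN⟩ : Fin N).succ := rfl
      have e1 : (⟨t, by omega⟩ : Fin (N + 1)) = (⟨t, htN⟩ : Fin N).castSucc := rfl
      rw [e2, hstep ⟨t, htN⟩ x, ← e1, ih (by omega) x]
      by_cases hpt : p ⟨t, htN⟩ = x - 1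
      · have hnew : (if ∃ i : Fin N, i.1 < t + 1 ∧ p i = x - 1 then 1 else 0) = 1 :=
          if_pos ⟨⟨t, htN⟩, Nat.lt_succ_self t, hpt⟩
        have hold : (if ∃ i : Fin N, i.1 < t ∧ p i = x - 1 then 1 else 0) = 0 := by
          apply if_neg
          rintro ⟨i', hi1, hi2⟩
          have : i' = ⟨t, htN⟩ := hmono.injective (by rw [hi2, hpt])
          rw [this] at hi1
          simp at hi1
        rw [if_pos hpt, hnew, hold]
      · have hiff : (∃ i : Fin N, i.1 < t + 1 ∧ p i = x - 1) ↔
            (∃ i : Fin N, i.1 < t ∧ p i = x - 1) := by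
          constructor
          · rintro ⟨i', hi1, hi2⟩
            refine ⟨i', ?_, hi2⟩
            rcases lt_or_eq_of_le (Nat.lt_succ_iff.mp hi1) with h | h
            · exact h
            · exfalso; apply hpt
              have he : i' = ⟨t, htN⟩ := Fin.ext h
              rwa [← he]
          · rintro ⟨i', hi1, hi2⟩
            exact ⟨i', by omega, hi2⟩
        rw [if_neg hpt, if_congr hiff rfl rfl]
        omega
  -- main count identity between the two edges
  have hNcard : ∀ x : ℤ,
      {y : ℤ | x ≤ y ∧ edgeSeq g y ≠ 0}.ncard =
      {y : ℤ | x ≤ y ∧ edgeSeq f y ≠ 0}.ncard +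
        (if ∃ i : Fin N, p i = x - 1 then 1 else 0) := by
    intro x
    have e3 : (⟨N, by omega⟩ : Fin (N + 1)) = Fin.last N := rfl
    have := htot N le_rfl x
    rw [e3, hN, h0] at this
    rw [this]
    congr 1
    refine if_congr ?_ rfl rfl
    exact ⟨fun ⟨i, _, hi⟩ => ⟨i, hi⟩, fun ⟨i, hi⟩ => ⟨i, i.isLt, hi⟩⟩
  -- conclusion
  intro i
  have hNg := card_ge g hgmono Kg hKg i
  have hid := hNcard (aSeq g (i + 1))
  have hgoal : aSeq g (i + 1) < aSeq f i → g (i + 1) ≤ f i := by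
    unfold aSeq; omega
  apply hgoal
  by_cases hP : ∃ i' : Fin N, p i' = aSeq g (i + 1) - 1
  · rw [if_pos hP] at hid
    have hax : aSeq g (i + 1) ≤ aSeq f i := card_le_imp f hfmono _ i (by omega)
    by_cases hP2 : ∃ i'' : Fin N, p i'' = aSeq g (i + 1)
    · exfalso
      obtain ⟨i'', h''⟩ := hP2
      have hz := hgP i'' _ h''
      have ho : edgeSeq g (aSeq g (i + 1)) = 1 := edge_one g rfl
      omega
    · obtain ⟨i', h'⟩ := hP
      have hf0 : edgeSeq f (aSeq g (i + 1)) = 0 := hfP i' _ h'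
      have : aSeq f i ≠ aSeq g (i + 1) := by
        intro he
        have : edgeSeq f (aSeq g (i + 1)) = 1 := edge_one f he
        omega
      omega
  · rw [if_neg hP] at hid
    have hax : aSeq g (i + 1) ≤ aSeq f (i + 1) := card_le_imp f hfmono _ (i + 1) (by omega)
    have := aSeq_lt f hfmono (show i < i + 1 by omega)
    omega

/-- For partitions `λ ⊆ μ`, the skew shape `μ/λ` is a horizontal strip (at most one square
per column, i.e. `μ_{i+1} ≤ λ_i` for all `i`) if and only if `edge λ` can be transformed
into `edge μ` by a sequence of replacements of a substring `10` by `01` performed at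
strictly left-to-right positions (overlap allowed). -/
theorem stmt3 (f g : ℕ → ℕ) (hf : IsPartition f) (hg : IsPartition g)
    (hsub : ∀ i, f i ≤ g i) :
    (∀ i, g (i + 1) ≤ f i) ↔
    ∃ (N : ℕ) (c : Fin (N + 1) → ℤ → ℕ) (p : Fin N → ℤ),
      c 0 = edgeSeq f ∧ c (Fin.last N) = edgeSeq g ∧ StrictMono p ∧
      ∀ i : Fin N,
        c i.castSucc (p i) = 1 ∧ c i.castSucc (p i + 1) = 0 ∧
        c i.succ (p i) = 0 ∧ c i.succ (p i + 1) = 1 ∧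
        ∀ j : ℤ, j ≠ p i → j ≠ p i + 1 → c i.succ j = c i.castSucc j := by
  exact ⟨fun h => forward_dir f g hf hg hsub h, fun h i => backward_dir f g hf hg hsub h i⟩
end

section
/- Fix r ≥ 1 and a partition μ. Let ξ₀, ξ₁ be r-ribbons each addable to or removable from μ, whose heads lie on diagonals d_s, d_t with s < t, and suppose no diagonal strictly between d_s and d_t contains the head of any addable or removable r-ribbon of μ. Then: (1) if both ξ₀, ξ₁ are addable, hgt(ξ₁) = hgt(ξ₀) − 1; (2) if one is addable and the other removable, hgt(ξ₁) = hgt(ξ₀); (3) if both are removable, hgt(ξ₁) = hgt(ξ₀) + 1. Moreover the extreme (leftmost and rightmost) ribbons among all addable and removable r-ribbons of μ are both addable, with heights r−1 and 0 respectively. -/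
open scoped Classical

/-- A doubly infinite bit sequence: a function `ℤ → ℕ` with all values `≤ 1`. -/
def IsBitSeq (s : ℤ → ℕ) : Prop := ∀ i, s i ≤ 1

/-- The quadruple `(w (i-r), t (i-r), s i, w i)` equals `(1,0,0,1)`:
the strip `t/s` with witness `w` has an `r`-ribbon at position `i`. -/
def Quad (r : ℕ) (s t w : ℤ → ℕ) (i : ℤ) : Prop :=
  w (i - r) = 1 ∧ t (i - r) = 0 ∧ s i = 0 ∧ w i = 1

/-- `w` is a witness for `t/s` being a horizontal `r`-ribbon strip: for every `i`, the
quadruple `(w (i-r), t (i-r), s i, w i)` is of the form `(a,a,b,b)` or equals `(1,0,0,1)`,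
the latter happening only finitely often. -/
def IsWitness (r : ℕ) (s t w : ℤ → ℕ) : Prop :=
  (∀ i : ℤ, (w (i - r) = t (i - r) ∧ s i = w i) ∨ Quad r s t w i) ∧
    {i : ℤ | Quad r s t w i}.Finite

/-- `t/s` is a horizontal `r`-ribbon strip (`s ≤ʰᵣ t`). -/
def HStrip (r : ℕ) (s t : ℤ → ℕ) : Prop := ∃ w, IsWitness r s t w

/-- The height `∑_{j=1}^{r-1} w (i - j)` of a ribbon at position `i` read off from `w`. -/
def hgtAt (r : ℕ) (w : ℤ → ℕ) (i : ℤ) : ℕ := ∑ j ∈ Finset.Ico 1 r, w (i - (j : ℤ))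

/-- An `r`-ribbon with head on diagonal `k` can be added to the shape with edge
sequence `s`. -/
def AddableRib (r : ℕ) (s : ℤ → ℕ) (k : ℤ) : Prop := s (k - r) = 1 ∧ s k = 0

/-- An `r`-ribbon with head on diagonal `k` can be removed from the shape with edge
sequence `s`. -/
def RemovableRib (r : ℕ) (s : ℤ → ℕ) (k : ℤ) : Prop := s (k - r) = 0 ∧ s k = 1


namespace StmtAux

lemma edgeSeq_le_one (f : ℕ → ℕ) (k : ℤ) : edgeSeq f k ≤ 1 := by
  unfold edgeSeq; split <;> simp

lemma hgtAt_eq (r : ℕ) (s : ℤ → ℕ) (k : ℤ) :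
    hgtAt r s k = ∑ m ∈ Finset.Ico (k - r + 1) k, s m := by
  unfold hgtAt
  refine Finset.sum_nbij' (fun j => k - (j : ℤ)) (fun m => (k - m).toNat) ?_ ?_ ?_ ?_ ?_ <;>
    intro a ha <;> simp only [Finset.mem_Ico] at * <;> omega

lemma sum_Ico_top (f : ℤ → ℕ) {a b : ℤ} (h : a ≤ b) :
    ∑ m ∈ Finset.Ico a (b + 1), f m = ∑ m ∈ Finset.Ico a b, f m + f b := by
  have : Finset.Ico a (b + 1) = insert b (Finset.Ico a b) := by
    ext x; simp only [Finset.mem_Ico, Finset.mem_insert]; omega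
  rw [this, Finset.sum_insert (by simp), add_comm]

lemma sum_Ico_consec (f : ℤ → ℕ) {a b c : ℤ} (hab : a ≤ b) (hbc : b ≤ c) :
    ∑ m ∈ Finset.Ico a b, f m + ∑ m ∈ Finset.Ico b c, f m = ∑ m ∈ Finset.Ico a c, f m := by
  rw [← Finset.Ico_union_Ico_eq_Ico hab hbc,
    Finset.sum_union (Finset.Ico_disjoint_Ico_consecutive a b c)]

lemma key (r : ℕ) (hr : 1 ≤ r) (s : ℤ → ℕ) (k₀ k₁ : ℤ) (h : k₀ < k₁)
    (hmid : ∀ j : ℤ, k₀ < j → j < k₁ → s (j - r) = s j) :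
    hgtAt r s k₀ + s k₀ = hgtAt r s k₁ + s (k₁ - r) := by
  have hA : hgtAt r s k₀ + s k₀ = ∑ m ∈ Finset.Ico (k₀ - r + 1) (k₀ + 1), s m := by
    rw [hgtAt_eq, sum_Ico_top s (by omega : k₀ - (r:ℤ) + 1 ≤ k₀)]
  have hB : hgtAt r s k₁ + s k₁ = ∑ m ∈ Finset.Ico (k₁ - r + 1) (k₁ + 1), s m := by
    rw [hgtAt_eq, sum_Ico_top s (by omega : k₁ - (r:ℤ) + 1 ≤ k₁)]
  have split1 : ∑ m ∈ Finset.Ico (k₀ - r + 1) (k₀ + 1), s m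
      + ∑ m ∈ Finset.Ico (k₀ + 1) (k₁ + 1), s m
      = ∑ m ∈ Finset.Ico (k₀ - r + 1) (k₁ + 1), s m :=
    sum_Ico_consec s (by omega) (by omega)
  have split2 : ∑ m ∈ Finset.Ico (k₀ - r + 1) (k₁ - r + 1), s m
      + ∑ m ∈ Finset.Ico (k₁ - r + 1) (k₁ + 1), s m
      = ∑ m ∈ Finset.Ico (k₀ - r + 1) (k₁ + 1), s m :=
    sum_Ico_consec s (by omega) (by omega)
  have shift : ∑ m ∈ Finset.Ico (k₀ - r + 1) (k₁ - r + 1), s m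
      = ∑ m ∈ Finset.Ico (k₀ + 1) (k₁ + 1), s (m - r) := by
    refine Finset.sum_nbij' (fun m => m + (r:ℤ)) (fun m => m - (r:ℤ)) ?_ ?_ ?_ ?_ ?_ <;>
      intro a ha <;> simp only [Finset.mem_Ico] at * <;> try omega
    congr 1; omega
  have top1 : ∑ m ∈ Finset.Ico (k₀ + 1) (k₁ + 1), s m
      = (∑ m ∈ Finset.Ico (k₀ + 1) k₁, s m) + s k₁ :=
    sum_Ico_top _ (by omega)
  have top2 : ∑ m ∈ Finset.Ico (k₀ + 1) (k₁ + 1), s (m - r)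
      = (∑ m ∈ Finset.Ico (k₀ + 1) k₁, s (m - r)) + s (k₁ - r) :=
    sum_Ico_top _ (by omega)
  have mid : ∑ m ∈ Finset.Ico (k₀ + 1) k₁, s (m - r)
      = ∑ m ∈ Finset.Ico (k₀ + 1) k₁, s m := by
    refine Finset.sum_congr rfl fun m hm => ?_
    simp only [Finset.mem_Ico] at hm
    exact hmid m (by omega) hm.2
  omega

lemma right_zero (f : ℕ → ℕ) (hf : IsPartition f) (k : ℤ) (hk : (f 0 : ℤ) ≤ k) :
    edgeSeq f k = 0 := by
  unfold edgeSeq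
  rw [if_neg]
  rintro ⟨j, hj⟩
  have := hf.1 0 j (Nat.zero_le j)
  omega

lemma left_one (f : ℕ → ℕ) (N : ℕ) (hN : ∀ n : ℕ, N ≤ n → f n = 0) (k : ℤ)
    (hk : k ≤ -(N : ℤ) - 1) : edgeSeq f k = 1 := by
  unfold edgeSeq
  rw [if_pos]
  refine ⟨(-k - 1).toNat, ?_⟩
  have h1 : ((-k - 1).toNat : ℤ) = -k - 1 := Int.toNat_of_nonneg (by omega)
  have h2 : f (-k - 1).toNat = 0 := by apply hN; omega
  rw [h2]; push_cast; omega

end StmtAux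

/-- Consecutive (by head diagonal) addable/removable `r`-ribbons of a partition `μ`:
two consecutive addable ribbons drop in height by 1, an addable and a removable one have
equal heights, two consecutive removable ones rise in height by 1; moreover the extreme
ribbons are addable, of heights `r-1` (leftmost) and `0` (rightmost). -/
theorem stmt5 (r : ℕ) (hr : 1 ≤ r) (f : ℕ → ℕ) (hf : IsPartition f) :
    (∀ k₀ k₁ : ℤ, k₀ < k₁ →
      (AddableRib r (edgeSeq f) k₀ ∨ RemovableRib r (edgeSeq f) k₀) →
      (AddableRib r (edgeSeq f) k₁ ∨ RemovableRib r (edgeSeq f) k₁) →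
      (∀ k : ℤ, k₀ < k → k < k₁ →
        ¬(AddableRib r (edgeSeq f) k ∨ RemovableRib r (edgeSeq f) k)) →
      ((AddableRib r (edgeSeq f) k₀ → AddableRib r (edgeSeq f) k₁ →
          hgtAt r (edgeSeq f) k₀ = hgtAt r (edgeSeq f) k₁ + 1) ∧
       ((AddableRib r (edgeSeq f) k₀ ∧ RemovableRib r (edgeSeq f) k₁) ∨
        (RemovableRib r (edgeSeq f) k₀ ∧ AddableRib r (edgeSeq f) k₁) →
          hgtAt r (edgeSeq f) k₀ = hgtAt r (edgeSeq f) k₁) ∧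
       (RemovableRib r (edgeSeq f) k₀ → RemovableRib r (edgeSeq f) k₁ →
          hgtAt r (edgeSeq f) k₁ = hgtAt r (edgeSeq f) k₀ + 1))) ∧
    (∃ kmin : ℤ, (AddableRib r (edgeSeq f) kmin ∧ hgtAt r (edgeSeq f) kmin = r - 1) ∧
      ∀ k : ℤ, (AddableRib r (edgeSeq f) k ∨ RemovableRib r (edgeSeq f) k) → kmin ≤ k) ∧
    (∃ kmax : ℤ, (AddableRib r (edgeSeq f) kmax ∧ hgtAt r (edgeSeq f) kmax = 0) ∧
      ∀ k : ℤ, (AddableRib r (edgeSeq f) k ∨ RemovableRib r (edgeSeq f) k) → k ≤ kmax) := by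
  set s := edgeSeq f with hs
  have hle : ∀ k, s k ≤ 1 := StmtAux.edgeSeq_le_one f
  obtain ⟨N, hN⟩ := hf.2
  have hleft : ∀ k : ℤ, k ≤ -(N : ℤ) - 1 → s k = 1 := StmtAux.left_one f N hN
  have hright : ∀ k : ℤ, (f 0 : ℤ) ≤ k → s k = 0 := StmtAux.right_zero f hf
  refine ⟨?_, ?_, ?_⟩
  · intro k₀ k₁ hlt h0 h1 hmidr
    have hmid : ∀ j : ℤ, k₀ < j → j < k₁ → s (j - r) = s j := by
      intro j hj1 hj2
      have := hmidr j hj1 hj2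
      have e1 := hle (j - r); have e2 := hle j
      simp only [AddableRib, RemovableRib, not_or, not_and_or] at this
      omega
    have hkey := StmtAux.key r hr s k₀ k₁ hlt hmid
    refine ⟨?_, ?_, ?_⟩
    · rintro ⟨-, a0⟩ ⟨a1, -⟩; omega
    · rintro (⟨⟨-, a0⟩, ⟨a1, -⟩⟩ | ⟨⟨-, a0⟩, ⟨a1, -⟩⟩) <;> omega
    · rintro ⟨-, a0⟩ ⟨a1, -⟩; omega
  · -- kmin
    obtain ⟨L, hL0, hLmin⟩ := Int.exists_least_of_bdd
      (P := fun k => s k = 0) ⟨-(N:ℤ), fun z hz => by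
        by_contra hc
        have := hleft z (by omega)
        omega⟩ ⟨(f 0 : ℤ), hright _ le_rfl⟩
    have hLr : s (L - r) = 1 := by
      have h1 : ¬ s (L - r) = 0 := fun hc => by have := hLmin _ hc; omega
      have := hle (L - r); omega
    refine ⟨L, ⟨⟨hLr, hL0⟩, ?_⟩, ?_⟩
    · unfold hgtAt
      rw [Finset.sum_congr rfl (fun j hj => ?_), Finset.sum_const, smul_eq_mul, mul_one,
        Nat.card_Ico]
      show s (L - (j:ℤ)) = 1
      simp only [Finset.mem_Ico] at hj
      have h1 : ¬ s (L - (j:ℤ)) = 0 := fun hc => by have := hLmin _ hc; omega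
      have := hle (L - (j:ℤ)); omega
    · rintro k (⟨-, hk⟩ | ⟨hk, -⟩)
      · exact hLmin _ hk
      · have := hLmin _ hk; omega
  · -- kmax
    obtain ⟨K, hK1, hKmax⟩ := Int.exists_greatest_of_bdd
      (P := fun k => s k = 1) ⟨(f 0 : ℤ), fun z hz => by
        by_contra hc
        have := hright z (by omega)
        omega⟩ ⟨-(N:ℤ) - 1, hleft _ le_rfl⟩
    have hK0 : s (K + r) = 0 := by
      have h1 : ¬ s (K + r) = 1 := fun hc => by have := hKmax _ hc; omega
      have := hle (K + r); omega
    refine ⟨K + r, ⟨⟨by rw [show K + (r:ℤ) - r = K by ring]; exact hK1, hK0⟩, ?_⟩, ?_⟩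
    · unfold hgtAt
      rw [Finset.sum_congr rfl (fun j hj => ?_), Finset.sum_const, smul_eq_mul, mul_zero]
      show s (K + r - (j:ℤ)) = 0
      simp only [Finset.mem_Ico] at hj
      have h1 : ¬ s (K + r - (j:ℤ)) = 1 := fun hc => by have := hKmax _ hc; omega
      have := hle (K + r - (j:ℤ)); omega
    · rintro k (⟨hk, -⟩ | ⟨-, hk⟩)
      · have := hKmax _ hk; omega
      · have := hKmax _ hk; omega
end

section
/- Fix r ≥ 1, a partition μ, and a height h ∈ {0,…,r−1}. The addable r-ribbons of height h and the removable r-ribbons of height h of μ are perfectly interleaved when ordered by the diagonal of their heads, with addable ribbons at both ends; in particular the number of addable r-ribbons of height h exceeds the number of removable r-ribbons of height h by exactly one. -/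
open scoped Classical

private lemma exists_desc (b : ℤ → Prop) {m n : ℤ} (hb : b m) (hn : ¬ b n) (hmn : m < n) :
    ∃ k, m < k ∧ k ≤ n ∧ b (k-1) ∧ ¬ b k := by
  classical
  set T := (Finset.Ioc m n).filter (fun k => ¬ b k) with hTdef
  have hT : T.Nonempty := ⟨n, by simp [hTdef, Finset.mem_filter, Finset.mem_Ioc, hmn, hn]⟩
  set j := T.min' hT with hj
  have hjT : j ∈ T := T.min'_mem hT
  rw [hTdef, Finset.mem_filter, Finset.mem_Ioc] at hjT
  refine ⟨j, hjT.1.1, hjT.1.2, ?_, hjT.2⟩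
  rcases eq_or_lt_of_le (by omega : m ≤ j - 1) with he | hlt
  · rwa [← he]
  · by_contra hbj
    have hmem : j - 1 ∈ T := by
      rw [hTdef, Finset.mem_filter, Finset.mem_Ioc]
      exact ⟨⟨hlt, by omega⟩, hbj⟩
    have := T.min'_le _ hmem
    omega

private lemma exists_asc (b : ℤ → Prop) {m n : ℤ} (hb : ¬ b m) (hn : b n) (hmn : m < n) :
    ∃ k, m < k ∧ k ≤ n ∧ ¬ b (k-1) ∧ b k := by
  classical
  obtain ⟨k, h1, h2, h3, h4⟩ := exists_desc (fun k => ¬ b k) hb (by simpa using hn) hmn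
  exact ⟨k, h1, h2, h3, not_not.mp h4⟩

private lemma key_count (b : ℤ → Prop) (M₁ M₂ : ℤ) (hM : M₁ < M₂)
    (h₁ : ∀ k, k ≤ M₁ → b k) (h₂ : ∀ k, M₂ ≤ k → ¬ b k) :
    {k : ℤ | b (k-1) ∧ ¬ b k}.Finite ∧ {k : ℤ | ¬ b (k-1) ∧ b k}.Finite ∧
      {k : ℤ | b (k-1) ∧ ¬ b k}.ncard = {k : ℤ | ¬ b (k-1) ∧ b k}.ncard + 1 := by
  classical
  have hD : {k : ℤ | b (k-1) ∧ ¬ b k}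
      = ↑((Finset.Ioc M₁ M₂).filter (fun k => b (k-1) ∧ ¬ b k)) := by
    ext k
    simp only [Finset.coe_filter, Set.mem_setOf_eq, Finset.mem_Ioc]
    constructor
    · rintro ⟨hk1, hk2⟩
      refine ⟨⟨?_, ?_⟩, hk1, hk2⟩
      · by_contra hc; exact hk2 (h₁ k (by omega))
      · by_contra hc; exact h₂ (k-1) (by omega) hk1
    · rintro ⟨-, hk⟩; exact hk
  have hA : {k : ℤ | ¬ b (k-1) ∧ b k}
      = ↑((Finset.Ioc M₁ M₂).filter (fun k => ¬ b (k-1) ∧ b k)) := by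
    ext k
    simp only [Finset.coe_filter, Set.mem_setOf_eq, Finset.mem_Ioc]
    constructor
    · rintro ⟨hk1, hk2⟩
      refine ⟨⟨?_, ?_⟩, hk1, hk2⟩
      · by_contra hc; exact hk1 (h₁ (k-1) (by omega))
      · by_contra hc; exact h₂ k (by omega) hk2
    · rintro ⟨-, hk⟩; exact hk
  refine ⟨by rw [hD]; exact (Finset.finite_toSet _), by rw [hA]; exact (Finset.finite_toSet _), ?_⟩
  rw [hD, hA, Set.ncard_coe_finset, Set.ncard_coe_finset]
  rw [Finset.card_filter, Finset.card_filter]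
  -- telescoping
  have step : ∀ k : ℤ, ((if b (k-1) ∧ ¬ b k then 1 else 0) : ℕ) + (if b k then 1 else 0)
      = (if ¬ b (k-1) ∧ b k then 1 else 0) + (if b (k-1) then 1 else 0) := by
    intro k
    by_cases h1 : b (k-1) <;> by_cases h2 : b k <;> simp [h1, h2]
  have hsum : (∑ k ∈ Finset.Ioc M₁ M₂, ((if b (k-1) ∧ ¬ b k then 1 else 0) : ℕ))
      + (∑ k ∈ Finset.Ioc M₁ M₂, (if b k then 1 else 0))
      = (∑ k ∈ Finset.Ioc M₁ M₂, ((if ¬ b (k-1) ∧ b k then 1 else 0) : ℕ))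
      + (∑ k ∈ Finset.Ioc M₁ M₂, (if b (k-1) then 1 else 0)) := by
    rw [← Finset.sum_add_distrib, ← Finset.sum_add_distrib]
    exact Finset.sum_congr rfl fun k _ => step k
  have hshift : (∑ k ∈ Finset.Ioc M₁ M₂, ((if b (k-1) then 1 else 0) : ℕ))
      = ∑ k ∈ Finset.Ioc (M₁-1) (M₂-1), (if b k then 1 else 0) := by
    refine Finset.sum_nbij' (fun k => k - 1) (fun k => k + 1) ?_ ?_ ?_ ?_ ?_ <;>
      intros <;> simp_all [Finset.mem_Ioc] <;> omega
  have e1 : Finset.Ioc (M₁-1) (M₂-1) = insert M₁ (Finset.Ioc M₁ (M₂-1)) := by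
    ext k; simp [Finset.mem_Ioc]; omega
  have e2 : Finset.Ioc M₁ M₂ = insert M₂ (Finset.Ioc M₁ (M₂-1)) := by
    ext k; simp [Finset.mem_Ioc]; omega
  have hn1 : M₁ ∉ Finset.Ioc M₁ (M₂-1) := by simp
  have hn2 : M₂ ∉ Finset.Ioc M₁ (M₂-1) := by simp
  have q1 : (∑ k ∈ Finset.Ioc M₁ M₂, ((if b k then 1 else 0) : ℕ))
      = ∑ k ∈ Finset.Ioc M₁ (M₂-1), (if b k then 1 else 0) := by
    rw [e2, Finset.sum_insert hn2, if_neg (h₂ M₂ le_rfl), zero_add]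
  have q2 : (∑ k ∈ Finset.Ioc (M₁-1) (M₂-1), ((if b k then 1 else 0) : ℕ))
      = 1 + ∑ k ∈ Finset.Ioc M₁ (M₂-1), (if b k then 1 else 0) := by
    rw [e1, Finset.sum_insert hn1, if_pos (h₁ M₁ le_rfl)]
  rw [q1, hshift, q2] at hsum
  omega


/-- For a partition `μ` and a height `h < r`: the addable and removable `r`-ribbons of
height `h` are perfectly interleaved by the diagonal of their head, with addable ribbons
at both ends; in particular there is exactly one more addable than removable one. -/
theorem stmt6 (r : ℕ) (hr : 1 ≤ r) (f : ℕ → ℕ) (hf : IsPartition f) (h : ℕ) (hh : h < r) :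
    {k : ℤ | AddableRib r (edgeSeq f) k ∧ hgtAt r (edgeSeq f) k = h}.Finite ∧
    {k : ℤ | RemovableRib r (edgeSeq f) k ∧ hgtAt r (edgeSeq f) k = h}.Finite ∧
    {k : ℤ | AddableRib r (edgeSeq f) k ∧ hgtAt r (edgeSeq f) k = h}.ncard =
      {k : ℤ | RemovableRib r (edgeSeq f) k ∧ hgtAt r (edgeSeq f) k = h}.ncard + 1 ∧
    (∀ k : ℤ, RemovableRib r (edgeSeq f) k → hgtAt r (edgeSeq f) k = h →
      (∃ a : ℤ, (AddableRib r (edgeSeq f) a ∧ hgtAt r (edgeSeq f) a = h) ∧ a < k) ∧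
      (∃ a : ℤ, (AddableRib r (edgeSeq f) a ∧ hgtAt r (edgeSeq f) a = h) ∧ k < a)) ∧
    (∀ a₁ a₂ : ℤ,
      AddableRib r (edgeSeq f) a₁ → hgtAt r (edgeSeq f) a₁ = h →
      AddableRib r (edgeSeq f) a₂ → hgtAt r (edgeSeq f) a₂ = h → a₁ < a₂ →
      (∀ a : ℤ, AddableRib r (edgeSeq f) a → hgtAt r (edgeSeq f) a = h →
        ¬(a₁ < a ∧ a < a₂)) →
      ∃! k : ℤ, (RemovableRib r (edgeSeq f) k ∧ hgtAt r (edgeSeq f) k = h) ∧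
        a₁ < k ∧ k < a₂) ∧
    (∀ k₁ k₂ : ℤ,
      RemovableRib r (edgeSeq f) k₁ → hgtAt r (edgeSeq f) k₁ = h →
      RemovableRib r (edgeSeq f) k₂ → hgtAt r (edgeSeq f) k₂ = h → k₁ < k₂ →
      (∀ k : ℤ, RemovableRib r (edgeSeq f) k → hgtAt r (edgeSeq f) k = h →
        ¬(k₁ < k ∧ k < k₂)) →
      ∃! a : ℤ, (AddableRib r (edgeSeq f) a ∧ hgtAt r (edgeSeq f) a = h) ∧
        k₁ < a ∧ a < k₂) := by
  classical
  obtain ⟨hmono, N, hN⟩ := hf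
  set s := edgeSeq f with hs
  have hbit : ∀ k : ℤ, s k ≤ 1 := by
    intro k; rw [hs]; unfold edgeSeq; split <;> simp
  set F : ℤ → ℕ := fun k => ∑ j ∈ Finset.Ico 0 r, s (k - (j : ℤ)) with hF
  have hFk : ∀ k : ℤ, F k = s k + hgtAt r s k := by
    intro k
    show (∑ j ∈ Finset.Ico 0 r, s (k - (j:ℤ))) = _
    rw [Finset.sum_eq_sum_Ico_succ_bot (by omega : 0 < r)]
    simp [hgtAt]
  have hFk1 : ∀ k : ℤ, F (k-1) = s (k - r) + hgtAt r s k := by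
    intro k
    have h1 : s (k - r) + ∑ j ∈ Finset.Ico 1 r, s (k - (j:ℤ))
        = ∑ j ∈ Finset.range r, s (k - 1 - (j:ℤ)) := by
      rw [add_comm, ← Finset.sum_Ico_succ_top (by omega : 1 ≤ r), Finset.sum_Ico_eq_sum_range]
      have hrr : r + 1 - 1 = r := by omega
      rw [hrr]
      exact Finset.sum_congr rfl fun j _ => by congr 1; push_cast; ring
    show (∑ j ∈ Finset.Ico 0 r, s (k - 1 - (j:ℤ))) = _
    rw [Finset.sum_Ico_eq_sum_range]
    simp only [Nat.sub_zero]
    rw [show (hgtAt r s k) = ∑ j ∈ Finset.Ico 1 r, s (k - (j:ℤ)) from rfl, h1]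
    exact Finset.sum_congr rfl fun j _ => by congr 1; push_cast; ring
  set bb : ℤ → Prop := fun k => h + 1 ≤ F k with hbb
  have hAdd : ∀ k : ℤ, (AddableRib r s k ∧ hgtAt r s k = h) ↔ (bb (k-1) ∧ ¬ bb k) := by
    intro k
    have e1 := hFk k
    have e2 := hFk1 k
    have b1 := hbit k
    have b2 := hbit (k - r)
    show _ ↔ ((h + 1 ≤ F (k-1)) ∧ ¬ (h + 1 ≤ F k))
    simp only [AddableRib]
    omega
  have hRem : ∀ k : ℤ, (RemovableRib r s k ∧ hgtAt r s k = h) ↔ (¬ bb (k-1) ∧ bb k) := by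
    intro k
    have e1 := hFk k
    have e2 := hFk1 k
    have b1 := hbit k
    have b2 := hbit (k - r)
    show _ ↔ (¬ (h + 1 ≤ F (k-1)) ∧ (h + 1 ≤ F k))
    simp only [RemovableRib]
    omega
  -- boundary behaviour
  have s_left : ∀ k : ℤ, k ≤ -(N:ℤ) - 1 → s k = 1 := by
    intro k hk
    rw [hs]; unfold edgeSeq
    rw [if_pos]
    refine ⟨(-(k+1)).toNat, ?_⟩
    have h1 : ((-(k+1)).toNat : ℤ) = -(k+1) := Int.toNat_of_nonneg (by omega)
    have h2 : N ≤ (-(k+1)).toNat := by omega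
    rw [hN _ h2]
    omega
  have s_right : ∀ k : ℤ, (f 0 : ℤ) ≤ k → s k = 0 := by
    intro k hk
    rw [hs]; unfold edgeSeq
    rw [if_neg]
    rintro ⟨j, hj⟩
    have := hmono 0 j (Nat.zero_le j)
    omega
  set M₁ : ℤ := -(N:ℤ) - 1 with hM₁
  set M₂ : ℤ := (f 0 : ℤ) + r with hM₂
  have hbbL : ∀ k, k ≤ M₁ → bb k := by
    intro k hk
    show h + 1 ≤ F k
    have hall : ∀ j ∈ Finset.Ico 0 r, s (k - (j:ℤ)) = 1 := by
      intro j hj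
      exact s_left _ (by omega)
    show h + 1 ≤ ∑ j ∈ Finset.Ico 0 r, s (k - (j:ℤ))
    rw [Finset.sum_congr rfl hall]
    simp
    omega
  have hbbR : ∀ k, M₂ ≤ k → ¬ bb k := by
    intro k hk
    show ¬ (h + 1 ≤ F k)
    have hall : ∀ j ∈ Finset.Ico 0 r, s (k - (j:ℤ)) = 0 := by
      intro j hj
      simp only [Finset.mem_Ico] at hj
      refine s_right _ (by omega)
    show ¬ (h + 1 ≤ ∑ j ∈ Finset.Ico 0 r, s (k - (j:ℤ)))
    rw [Finset.sum_congr rfl hall]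
    simp
  have hM12 : M₁ < M₂ := by omega
  obtain ⟨fin1, fin2, hcount⟩ := key_count bb M₁ M₂ hM12 hbbL hbbR
  have hsetA : {k : ℤ | AddableRib r s k ∧ hgtAt r s k = h} = {k : ℤ | bb (k-1) ∧ ¬ bb k} :=
    Set.ext fun k => hAdd k
  have hsetR : {k : ℤ | RemovableRib r s k ∧ hgtAt r s k = h} = {k : ℤ | ¬ bb (k-1) ∧ bb k} :=
    Set.ext fun k => hRem k
  -- no two ascents between consecutive descents, and vice versa
  have noTwoAsc : ∀ a₁ a₂ : ℤ, (∀ a : ℤ, AddableRib r s a → hgtAt r s a = h →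
        ¬(a₁ < a ∧ a < a₂)) → ∀ u v : ℤ, a₁ < u → v < a₂ → u < v →
      (¬ bb (u-1) ∧ bb u) → (¬ bb (v-1) ∧ bb v) → False := by
    intro a₁ a₂ hbet u v hu hv huv hau hav
    have hne : u ≠ v - 1 := fun he => hav.1 (he ▸ hau.2)
    obtain ⟨j, hj1, hj2, hj3, hj4⟩ := exists_desc bb hau.2 hav.1 (by omega : u < v - 1)
    have := (hAdd j).mpr ⟨hj3, hj4⟩
    exact hbet j this.1 this.2 ⟨by omega, by omega⟩
  have noTwoDesc : ∀ k₁ k₂ : ℤ, (∀ k : ℤ, RemovableRib r s k → hgtAt r s k = h →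
        ¬(k₁ < k ∧ k < k₂)) → ∀ u v : ℤ, k₁ < u → v < k₂ → u < v →
      (bb (u-1) ∧ ¬ bb u) → (bb (v-1) ∧ ¬ bb v) → False := by
    intro k₁ k₂ hbet u v hu hv huv hau hav
    have hne : u ≠ v - 1 := fun he => hau.2 (he ▸ hav.1)
    obtain ⟨j, hj1, hj2, hj3, hj4⟩ := exists_asc bb hau.2 hav.1 (by omega : u < v - 1)
    have := (hRem j).mpr ⟨hj3, hj4⟩
    exact hbet j this.1 this.2 ⟨by omega, by omega⟩
  refine ⟨by rw [hsetA]; exact fin1, by rw [hsetR]; exact fin2,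
    by rw [hsetA, hsetR]; exact hcount, ?_, ?_, ?_⟩
  · -- every removable has addables on both sides
    intro k hrem hhgt
    have hb := (hRem k).mp ⟨hrem, hhgt⟩
    constructor
    · obtain ⟨a, ha1, ha2, ha3, ha4⟩ :=
        exists_desc bb (hbbL (min M₁ (k-2)) (min_le_left _ _)) hb.1
          (by have := min_le_right M₁ (k-2); omega)
      exact ⟨a, (hAdd a).mpr ⟨ha3, ha4⟩, by omega⟩
    · obtain ⟨a, ha1, ha2, ha3, ha4⟩ :=
        exists_desc bb hb.2 (hbbR (max M₂ (k+1)) (le_max_left _ _))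
          (by have := le_max_right M₂ (k+1); omega)
      exact ⟨a, (hAdd a).mpr ⟨ha3, ha4⟩, ha1⟩
  · -- unique removable between consecutive addables
    intro a₁ a₂ h1 h2 h3 h4 hlt hbet
    have d1 := (hAdd a₁).mp ⟨h1, h2⟩
    have d2 := (hAdd a₂).mp ⟨h3, h4⟩
    have hne : a₁ ≠ a₂ - 1 := fun he => d1.2 (he ▸ d2.1)
    obtain ⟨k, hk1, hk2, hk3, hk4⟩ := exists_asc bb d1.2 d2.1 (by omega : a₁ < a₂ - 1)
    refine ⟨k, ⟨(hRem k).mpr ⟨hk3, hk4⟩, hk1, by omega⟩, ?_⟩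
    intro y ⟨⟨hy1, hy2⟩, hy3, hy4⟩
    have hay := (hRem y).mp ⟨hy1, hy2⟩
    by_contra hne2
    rcases lt_or_gt_of_ne hne2 with hlt2 | hlt2
    · exact noTwoAsc a₁ a₂ hbet y k hy3 (by omega) hlt2 hay ⟨hk3, hk4⟩
    · exact noTwoAsc a₁ a₂ hbet k y hk1 hy4 hlt2 ⟨hk3, hk4⟩ hay
  · -- unique addable between consecutive removables
    intro k₁ k₂ h1 h2 h3 h4 hlt hbet
    have d1 := (hRem k₁).mp ⟨h1, h2⟩
    have d2 := (hRem k₂).mp ⟨h3, h4⟩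
    have hne : k₁ ≠ k₂ - 1 := fun he => d2.1 (he ▸ d1.2)
    obtain ⟨a, ha1, ha2, ha3, ha4⟩ := exists_desc bb d1.2 d2.1 (by omega : k₁ < k₂ - 1)
    refine ⟨a, ⟨(hAdd a).mpr ⟨ha3, ha4⟩, ha1, by omega⟩, ?_⟩
    intro y ⟨⟨hy1, hy2⟩, hy3, hy4⟩
    have hay := (hAdd y).mp ⟨hy1, hy2⟩
    by_contra hne2
    rcases lt_or_gt_of_ne hne2 with hlt2 | hlt2
    · exact noTwoDesc k₁ k₂ hbet y a hy3 (by omega) hlt2 hay ⟨ha3, ha4⟩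
    · exact noTwoDesc k₁ k₂ hbet a y ha1 hy4 hlt2 ⟨ha3, ha4⟩ hay
end

section
/- Fix r ≥ 1. Let λ ≺_r μ, λ ≺_r ν, μ ≺_r κ, ν ≺_r κ with μ ≠ ν (so κ covers both μ and ν, and λ is covered by both, in the r-rim hook order). Then hgt(κ/μ) + hgt(κ/ν) = hgt(μ/λ) + hgt(ν/λ). Specifically, if the heads of μ/λ and κ/ν lie on diagonal d_s and those of ν/λ and κ/μ on diagonal d_t, then s−t ∉ {−r, 0, r}; if |s−t| > r the heights match pairwise, while if |s−t| < r one pair increases by 1 and the other decreases by 1. -/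
open scoped Classical

/-- `t` is obtained from `s` by adding one `r`-ribbon with head on diagonal `p`:
the two sequences differ exactly at positions `p - r` and `p`, where the bits
`(1,0)` of `s` become `(0,1)` in `t`. -/
def EdgeFlip (r : ℕ) (s t : ℤ → ℕ) (p : ℤ) : Prop :=
  s (p - r) = 1 ∧ s p = 0 ∧ t (p - r) = 0 ∧ t p = 1 ∧
    ∀ j : ℤ, j ≠ p - r → j ≠ p → s j = t j

/-!
Adding an `r`-ribbon with head on diagonal `p` moves a bit of the edge sequence from
position `p - r` to position `p`. The height of a ribbon with head `q` counts the bits strictly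
between `q - r` and `q`, so such a move changes it by `[p ∈ window] - [p - r ∈ window]`.
Applied to `μ/λ` at `t` and `ν/λ` at `s`, the position of `s - t` relative to `-r, 0, r`
decides everything; those three values are excluded because a bit cannot be flipped twice.
-/

open Finset

lemma hgtAt_eq_sum_Ioo (r : ℕ) (w : ℤ → ℕ) (q : ℤ) :
    hgtAt r w q = ∑ x ∈ Ioo (q - r) q, w x := by
  refine sum_nbij' (fun j => q - j) (fun x => (q - x).toNat) ?_ ?_ ?_ ?_ fun _ _ => rfl <;>
    intro a ha <;> simp only [mem_Ico, mem_Ioo] at ha ⊢ <;> omega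

lemma EdgeFlip.add_ite_eq {r : ℕ} {L M : ℤ → ℕ} {p : ℤ} (h : EdgeFlip r L M p) (x : ℤ) :
    M x + (if x = p - r then 1 else 0) = L x + (if x = p then 1 else 0) := by
  obtain ⟨hL₁, hL₀, hM₀, hM₁, hrest⟩ := h
  have hp : p - r ≠ p := fun hpr => by rw [hpr] at hL₁; omega
  by_cases hx₁ : x = p - r
  · simp [hx₁, hL₁, hM₀, hp]
  by_cases hx₂ : x = p
  · simp [hx₂, hL₀, hM₁, hp.symm]
  · simp [hx₁, hx₂, hrest x hx₁ hx₂]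

lemma EdgeFlip.hgtAt_add_ite {r : ℕ} {L M : ℤ → ℕ} {p : ℤ} (h : EdgeFlip r L M p) (q : ℤ) :
    hgtAt r M q + (if p - r ∈ Ioo (q - r) q then 1 else 0)
      = hgtAt r L q + (if p ∈ Ioo (q - r) q then 1 else 0) := by
  rw [hgtAt_eq_sum_Ioo, hgtAt_eq_sum_Ioo, ← sum_ite_eq' _ (p - r) fun _ => 1,
    ← sum_ite_eq' _ p fun _ => 1, ← sum_add_distrib, ← sum_add_distrib]
  exact sum_congr rfl fun x _ => h.add_ite_eq x

theorem stmt7_general (r : ℕ) (lam mu nu kap : ℕ → ℕ) (s t : ℤ)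
    (h1 : EdgeFlip r (edgeSeq lam) (edgeSeq mu) s)
    (h2 : EdgeFlip r (edgeSeq lam) (edgeSeq nu) t)
    (h4 : EdgeFlip r (edgeSeq mu) (edgeSeq kap) t) :
    (s - t ≠ 0 ∧ s - t ≠ (r : ℤ) ∧ s - t ≠ -(r : ℤ)) ∧
    hgtAt r (edgeSeq mu) t + hgtAt r (edgeSeq nu) s
      = hgtAt r (edgeSeq lam) s + hgtAt r (edgeSeq lam) t ∧
    (((r : ℤ) < s - t ∨ s - t < -(r : ℤ)) →
      hgtAt r (edgeSeq mu) t = hgtAt r (edgeSeq lam) t ∧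
      hgtAt r (edgeSeq nu) s = hgtAt r (edgeSeq lam) s) ∧
    ((-(r : ℤ) < s - t ∧ s - t < 0) →
      hgtAt r (edgeSeq mu) t = hgtAt r (edgeSeq lam) t + 1 ∧
      hgtAt r (edgeSeq nu) s + 1 = hgtAt r (edgeSeq lam) s) ∧
    ((0 < s - t ∧ s - t < (r : ℤ)) →
      hgtAt r (edgeSeq mu) t + 1 = hgtAt r (edgeSeq lam) t ∧
      hgtAt r (edgeSeq nu) s = hgtAt r (edgeSeq lam) s + 1) := by
  have hst : s ≠ t := fun h => by have := h1.2.2.2.1; have := h4.2.1; subst h; omega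
  have hsr : s - r ≠ t := fun h => by have := h1.1; have := h2.2.1; subst h; omega
  have htr : t - r ≠ s := fun h => by have := h2.1; have := h1.2.1; subst h; omega
  have hmu := h1.hgtAt_add_ite t
  have hnu := h2.hgtAt_add_ite s
  simp only [mem_Ioo] at hmu hnu
  split_ifs at hmu hnu <;> omega

/-- Conservation of height around a square: if `λ ≺ᵣ μ, ν ≺ᵣ κ` with `μ ≠ ν`, where the
heads of `μ/λ` and `κ/ν` lie on diagonal `s` and those of `ν/λ` and `κ/μ` on diagonal `t`,
then `s - t ∉ {-r, 0, r}`, the total height is conserved, heights match pairwise when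
`|s - t| > r`, and one pair increases by `1` while the other decreases by `1` when
`|s - t| < r`. -/
theorem stmt7 (r : ℕ) (hr : 1 ≤ r) (lam mu nu kap : ℕ → ℕ)
    (hlam : IsPartition lam) (hmu : IsPartition mu) (hnu : IsPartition nu)
    (hkap : IsPartition kap) (hne : mu ≠ nu) (s t : ℤ)
    (h1 : EdgeFlip r (edgeSeq lam) (edgeSeq mu) s)
    (h2 : EdgeFlip r (edgeSeq lam) (edgeSeq nu) t)
    (h3 : EdgeFlip r (edgeSeq nu) (edgeSeq kap) s)
    (h4 : EdgeFlip r (edgeSeq mu) (edgeSeq kap) t) :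
    (s - t ≠ 0 ∧ s - t ≠ (r : ℤ) ∧ s - t ≠ -(r : ℤ)) ∧
    hgtAt r (edgeSeq mu) t + hgtAt r (edgeSeq nu) s
      = hgtAt r (edgeSeq lam) s + hgtAt r (edgeSeq lam) t ∧
    (((r : ℤ) < s - t ∨ s - t < -(r : ℤ)) →
      hgtAt r (edgeSeq mu) t = hgtAt r (edgeSeq lam) t ∧
      hgtAt r (edgeSeq nu) s = hgtAt r (edgeSeq lam) s) ∧
    ((-(r : ℤ) < s - t ∧ s - t < 0) →
      hgtAt r (edgeSeq mu) t = hgtAt r (edgeSeq lam) t + 1 ∧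
      hgtAt r (edgeSeq nu) s + 1 = hgtAt r (edgeSeq lam) s) ∧
    ((0 < s - t ∧ s - t < (r : ℤ)) →
      hgtAt r (edgeSeq mu) t + 1 = hgtAt r (edgeSeq lam) t ∧
      hgtAt r (edgeSeq nu) s = hgtAt r (edgeSeq lam) s + 1) :=
  stmt7_general r lam mu nu kap s t h1 h2 h4
end

section
/- Fix r ≥ 1. Define endomorphisms U and D of the free ℤ[q]-module on partitions by U(λ) = Σ_{μ: λ ≺_r μ} q^{hgt(μ/λ)} μ and D(λ) = Σ_{μ: μ ≺_r λ} q^{hgt(λ/μ)} μ. Then D∘U − U∘D = ((1−q^{2r})/(1−q²))·Id, i.e., D∘U = U∘D + (1 + q² + q⁴ + … + q^{2(r−1)})·Id. -/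
open scoped Classical

/-- The type of partitions. -/
abbrev PartT : Type := {f : ℕ → ℕ // IsPartition f}

/-- The free `ℤ[q]`-module on the set of partitions. -/
abbrev FreeMod : Type := PartT →₀ Polynomial ℤ

/-- `λ ≺ᵣ μ`: `μ` is obtained from `λ` by adding one `r`-ribbon. -/
def CovRib (r : ℕ) (lam mu : PartT) : Prop :=
  ∃ k : ℤ, EdgeFlip r (edgeSeq lam.1) (edgeSeq mu.1) k

/-!
Encode a partition by its edge sequence. Adding or removing an `r`-ribbon with head on diagonal
`k` exchanges the bits at positions `k - r` and `k`; conversely, exchanging any two bits of an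
edge sequence gives again an edge sequence, because every transposition of `ℤ` is a product of
adjacent ones and an adjacent exchange adds or removes a single box. Hence `U λ` (resp. `D λ`) is
the sum, over the addable (resp. removable) heads `k`, of `q ^ hgt` times `λ` with the bits at
`k - r` and `k` exchanged.

In `D U λ` and `U D λ` the terms that do not return to `λ` match up: adding the ribbon with head
`k` and removing the one with head `k'` touch disjoint positions in both expansions, so the two
moves commute, with the same total height. The coefficient of `λ` in `D U - U D` is the sum of
`q ^ (2 hgt)` over addable minus removable heads. If `c k` is the number of ones among the
positions `k - r, …, k - 1`, the term at `k` is `(q ^ (2 c k) - q ^ (2 c (k + 1))) / (q² - 1)`,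
so the sum telescopes to `(q ^ (2 r) - 1) / (q² - 1)`.
-/

open Equiv Polynomial

section EdgeSequence

def onePos (f : ℕ → ℕ) (j : ℕ) : ℤ := (f j : ℤ) - j - 1

lemma edgeSeq_eq_one_iff {f : ℕ → ℕ} {k : ℤ} : edgeSeq f k = 1 ↔ k ∈ Set.range (onePos f) := by
  unfold edgeSeq; split <;> simp_all [onePos]

lemma edgeSeq_eq_zero_iff {f : ℕ → ℕ} {k : ℤ} : edgeSeq f k = 0 ↔ k ∉ Set.range (onePos f) := by
  unfold edgeSeq; split <;> simp_all [onePos]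

lemma edgeSeq_le_one (f : ℕ → ℕ) (k : ℤ) : edgeSeq f k ≤ 1 := by
  unfold edgeSeq; split <;> simp

lemma edgeSeq_apply_congr {f f' : ℕ → ℕ} {k k' : ℤ}
    (h : k ∈ Set.range (onePos f) ↔ k' ∈ Set.range (onePos f')) : edgeSeq f k = edgeSeq f' k' := by
  by_cases hk : k ∈ Set.range (onePos f)
  · rw [edgeSeq_eq_one_iff.2 hk, edgeSeq_eq_one_iff.2 (h.1 hk)]
  · rw [edgeSeq_eq_zero_iff.2 hk, edgeSeq_eq_zero_iff.2 (mt h.2 hk)]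

lemma edgeSeq_eq_comp_swap_of_onePos {f f' : ℕ → ℕ} {a b : ℤ}
    (h : onePos f' = swap a b ∘ onePos f) : edgeSeq f' = edgeSeq f ∘ swap a b := by
  funext k
  refine edgeSeq_apply_congr ?_
  simp only [h, Set.mem_range, Function.comp_apply, ← Equiv.eq_symm_apply, symm_swap]

lemma IsPartition.strictAnti_onePos {f : ℕ → ℕ} (hf : IsPartition f) : StrictAnti (onePos f) :=
  strictAnti_nat_of_succ_lt fun j => by
    have := hf.1 j (j + 1) j.le_succ
    unfold onePos
    push_cast
    omega

lemma edgeSeq_inj {f f' : ℕ → ℕ} (hf : IsPartition f) (hf' : IsPartition f')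
    (h : edgeSeq f = edgeSeq f') : f = f' := by
  have hrange : Set.range (onePos f) = Set.range (onePos f') := by
    ext k
    rw [← edgeSeq_eq_one_iff, ← edgeSeq_eq_one_iff, h]
  have hpos := (hf.strictAnti_onePos.dual_right.range_inj hf'.strictAnti_onePos.dual_right).1 hrange
  funext j
  have := congrFun hpos j
  simp only [Function.comp_apply, OrderDual.toDual_inj, onePos] at this
  omega

lemma PartT.ext_edgeSeq {lam mu : PartT} (h : edgeSeq lam.1 = edgeSeq mu.1) : lam = mu :=
  Subtype.ext (edgeSeq_inj lam.2 mu.2 h)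

lemma IsPartition.edgeSeq_eventually {f : ℕ → ℕ} (hf : IsPartition f) :
    ∃ N : ℕ, (∀ k : ℤ, k < -N → edgeSeq f k = 1) ∧ ∀ k : ℤ, N ≤ k → edgeSeq f k = 0 := by
  obtain ⟨hanti, M, hM⟩ := hf
  refine ⟨M + f 0, fun k hk => edgeSeq_eq_one_iff.2 ⟨(-k - 1).toNat, ?_⟩, fun k hk => ?_⟩
  · rw [onePos, hM _ (by omega)]
    omega
  · rw [edgeSeq_eq_zero_iff]
    rintro ⟨j, rfl⟩
    have := hanti 0 j j.zero_le
    simp only [onePos] at hk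
    omega

lemma IsPartition.update {f : ℕ → ℕ} (hf : IsPartition f) {j v : ℕ} (hle : f (j + 1) ≤ v)
    (hge : ∀ i, i + 1 = j → v ≤ f i) : IsPartition (Function.update f j v) := by
  obtain ⟨hanti, M, hM⟩ := hf
  refine ⟨fun a b hab => antitone_nat_of_succ_le (fun i => ?_) hab, M + j + 1, fun n hn => ?_⟩
  · rcases lt_trichotomy i j with h | rfl | h
    · rcases eq_or_ne (i + 1) j with rfl | h'
      · simp [hge i rfl]
      · simp [Function.update, h.ne, h', hanti i (i + 1)]
    · simp [Function.update, hle]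
    · simp [Function.update, h.ne', (show i + 1 ≠ j by omega), hanti i (i + 1)]
  · rw [Function.update_of_ne (by omega), hM n (by omega)]

lemma onePos_update (f : ℕ → ℕ) (j v : ℕ) :
    onePos (Function.update f j v) = Function.update (onePos f) j ((v : ℤ) - j - 1) := by
  funext i
  rcases eq_or_ne i j with rfl | h
  · simp [onePos]
  · simp [onePos, Function.update_of_ne h]

lemma update_eq_swap_comp {g : ℕ → ℤ} (hg : g.Injective) (j : ℕ) {b : ℤ}
    (hb : b ∉ Set.range g) : Function.update g j b = swap (g j) b ∘ g := by
  funext i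
  rcases eq_or_ne i j with rfl | h
  · simp
  · rw [Function.update_of_ne h, Function.comp_apply, swap_apply_of_ne_of_ne (hg.ne h)]
    exact fun h' => hb ⟨i, h'⟩

lemma comp_swap_eq_self {α β : Type*} [DecidableEq α] {s : α → β} {a b : α} (h : s a = s b) :
    s ∘ swap a b = s := by
  rw [comp_swap_eq_update, h, Function.update_eq_self, ← h, Function.update_eq_self]

lemma IsPartition.exists_edgeSeq_add_box {f : ℕ → ℕ} (hf : IsPartition f) {k : ℤ}
    (hk : k ∈ Set.range (onePos f)) (hk1 : k + 1 ∉ Set.range (onePos f)) :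
    ∃ f', IsPartition f' ∧ edgeSeq f' = edgeSeq f ∘ swap k (k + 1) := by
  obtain ⟨j, rfl⟩ := hk
  have hstep : ∀ i, i + 1 = j → f j + 1 ≤ f i := by
    intro i hi
    have hlt := hf.strictAnti_onePos (show i < j by omega)
    have hne : onePos f i ≠ onePos f j + 1 := fun h => hk1 ⟨i, h⟩
    simp only [onePos] at hlt hne
    omega
  refine ⟨Function.update f j (f j + 1),
    hf.update ((hf.1 j (j + 1) j.le_succ).trans (f j).le_succ) hstep,
    edgeSeq_eq_comp_swap_of_onePos ?_⟩
  rw [onePos_update, ← update_eq_swap_comp hf.strictAnti_onePos.injective j hk1]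
  congr 1
  simp only [onePos]
  push_cast
  ring

lemma IsPartition.exists_edgeSeq_remove_box {f : ℕ → ℕ} (hf : IsPartition f) {k : ℤ}
    (hk : k ∉ Set.range (onePos f)) (hk1 : k + 1 ∈ Set.range (onePos f)) :
    ∃ f', IsPartition f' ∧ edgeSeq f' = edgeSeq f ∘ swap k (k + 1) := by
  obtain ⟨j, hj⟩ := hk1
  have hstep : f (j + 1) + 1 ≤ f j := by
    have hlt := hf.strictAnti_onePos (show j < j + 1 by omega)
    have hne : onePos f (j + 1) ≠ k := fun h => hk ⟨j + 1, h⟩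
    simp only [onePos] at hj hlt hne
    omega
  refine ⟨Function.update f j (f j - 1),
    hf.update (by omega) fun i hi => (f j).sub_le 1 |>.trans (hf.1 i j (by omega)),
    edgeSeq_eq_comp_swap_of_onePos ?_⟩
  rw [swap_comm, onePos_update, ← hj, ← update_eq_swap_comp hf.strictAnti_onePos.injective j hk]
  congr 1
  simp only [onePos] at hj
  omega

lemma IsPartition.exists_edgeSeq_comp_swap_add_one {f : ℕ → ℕ} (hf : IsPartition f) (k : ℤ) :
    ∃ f', IsPartition f' ∧ edgeSeq f' = edgeSeq f ∘ swap k (k + 1) := by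
  by_cases hk : k ∈ Set.range (onePos f) <;> by_cases hk1 : k + 1 ∈ Set.range (onePos f)
  · exact ⟨f, hf, (comp_swap_eq_self (edgeSeq_apply_congr (iff_of_true hk hk1))).symm⟩
  · exact hf.exists_edgeSeq_add_box hk hk1
  · exact hf.exists_edgeSeq_remove_box hk hk1
  · exact ⟨f, hf, (comp_swap_eq_self (edgeSeq_apply_congr (iff_of_false hk hk1))).symm⟩

lemma IsPartition.exists_edgeSeq_comp_swap {f : ℕ → ℕ} (hf : IsPartition f) (a b : ℤ) :
    ∃ f', IsPartition f' ∧ edgeSeq f' = edgeSeq f ∘ swap a b := by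
  wlog hab : a ≤ b generalizing a b
  · rw [swap_comm]
    exact this b a (by omega)
  rcases hab.eq_or_lt with rfl | hlt
  · exact ⟨f, hf, by simp⟩
  replace hab : a + 1 ≤ b := hlt
  clear hlt
  induction b, hab using Int.leInduction generalizing f with
  | base => exact hf.exists_edgeSeq_comp_swap_add_one a
  | succ b hab ih =>
    obtain ⟨f₁, hf₁, h₁⟩ := hf.exists_edgeSeq_comp_swap_add_one b
    obtain ⟨f₂, hf₂, h₂⟩ := ih hf₁
    obtain ⟨f₃, hf₃, h₃⟩ := hf₂.exists_edgeSeq_comp_swap_add_one b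
    refine ⟨f₃, hf₃, ?_⟩
    rw [h₃, h₂, h₁, swap_comm a (b + 1),
      ← swap_mul_swap_mul_swap (by omega : a ≠ b) (by omega : a ≠ b + 1)]
    rfl

end EdgeSequence

section Ribbons

variable {r : ℕ} {s : ℤ → ℕ}

def IsAddableAt (r : ℕ) (s : ℤ → ℕ) (k : ℤ) : Prop := s (k - r) = 1 ∧ s k = 0

def IsRemovableAt (r : ℕ) (s : ℤ → ℕ) (k : ℤ) : Prop := s (k - r) = 0 ∧ s k = 1

lemma edgeFlip_iff (hr : 0 < r) {t : ℤ → ℕ} {p : ℤ} :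
    EdgeFlip r s t p ↔ IsAddableAt r s p ∧ t = s ∘ swap (p - r) p := by
  have hp : p - r ≠ p := by omega
  constructor
  · rintro ⟨h1, h0, t0, t1, heq⟩
    refine ⟨⟨h1, h0⟩, funext fun j => ?_⟩
    rcases eq_or_ne j (p - r) with rfl | hj
    · simp [t0, h0]
    rcases eq_or_ne j p with rfl | hj'
    · simp [t1, h1]
    · simp [swap_apply_of_ne_of_ne hj hj', heq j hj hj']
  · rintro ⟨⟨h1, h0⟩, rfl⟩
    exact ⟨h1, h0, by simp [h0], by simp [h1],
      fun j hj hj' => by simp [swap_apply_of_ne_of_ne hj hj']⟩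

lemma isRemovableAt_comp_swap_self {k : ℤ} :
    IsRemovableAt r (s ∘ swap (k - r) k) k ↔ IsAddableAt r s k := by
  simp [IsRemovableAt, IsAddableAt, and_comm]

lemma isAddableAt_comp_swap_self {k : ℤ} :
    IsAddableAt r (s ∘ swap (k - r) k) k ↔ IsRemovableAt r s k := by
  simp [IsRemovableAt, IsAddableAt, and_comm]

lemma isAddableAt_and_isRemovableAt_comp_swap_iff {k k' : ℤ} :
    (IsAddableAt r s k ∧ IsRemovableAt r (s ∘ swap (k - r) k) k' ∧ k' ≠ k) ↔
      IsAddableAt r s k ∧ IsRemovableAt r s k' ∧ k' ≠ k - r ∧ k' - r ≠ k := by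
  simp only [IsAddableAt, IsRemovableAt, Function.comp_apply, swap_apply_def]
  grind

lemma isRemovableAt_and_isAddableAt_comp_swap_iff {k k' : ℤ} :
    (IsRemovableAt r s k' ∧ IsAddableAt r (s ∘ swap (k' - r) k') k ∧ k ≠ k') ↔
      IsAddableAt r s k ∧ IsRemovableAt r s k' ∧ k' ≠ k - r ∧ k' - r ≠ k := by
  simp only [IsAddableAt, IsRemovableAt, Function.comp_apply, swap_apply_def]
  grind

lemma eq_of_comp_swap_eq {k k' : ℤ} (h₁ : s (k - r) = s (k' - r)) (h₂ : s k = s k')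
    (hne : s (k - r) ≠ s k) (h : s ∘ swap (k - r) k = s ∘ swap (k' - r) k') : k = k' := by
  have := congrFun h k
  simp only [Function.comp_apply, swap_apply_def] at this
  grind

lemma comp_swap_comm {k k' : ℤ} (h : k ≠ k') (h₁ : k' ≠ k - r) (h₂ : k' - r ≠ k) :
    s ∘ swap (k - r) k ∘ swap (k' - r) k' = s ∘ swap (k' - r) k' ∘ swap (k - r) k := by
  funext x
  simp only [Function.comp_apply]
  congr 1
  simp only [swap_apply_def]
  split_ifs <;> omega

lemma mem_Ico_of_isAddableAt_or_isRemovableAt {N : ℕ}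
    (hl : ∀ k : ℤ, k < -N → s k = 1) (hr : ∀ k : ℤ, N ≤ k → s k = 0) {k : ℤ}
    (h : IsAddableAt r s k ∨ IsRemovableAt r s k) : k ∈ Finset.Ico (-N : ℤ) (N + r) := by
  unfold IsAddableAt IsRemovableAt at h
  have := hl k
  have := hl (k - r)
  have := hr k
  have := hr (k - r)
  rw [Finset.mem_Ico]
  omega

lemma hgtAt_eq_sum_Ioo_s8 (r : ℕ) (s : ℤ → ℕ) (p : ℤ) :
    hgtAt r s p = ∑ m ∈ Finset.Ioo (p - r) p, s m := by
  refine Finset.sum_nbij' (fun j => p - j) (fun m => (p - m).toNat) ?_ ?_ ?_ ?_ fun _ _ => rfl <;>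
    intro x hx <;> simp only [Finset.mem_Ico, Finset.mem_Ioo] at hx ⊢ <;> omega

lemma hgtAt_comp_swap_self (p : ℤ) : hgtAt r (s ∘ swap (p - r) p) p = hgtAt r s p := by
  simp only [hgtAt_eq_sum_Ioo_s8]
  refine Finset.sum_congr rfl fun m hm => ?_
  rw [Finset.mem_Ioo] at hm
  rw [Function.comp_apply, swap_apply_of_ne_of_ne hm.1.ne' hm.2.ne]

lemma cast_comp_swap_apply {a b : ℤ} (hab : a ≠ b) (m : ℤ) :
    ((s (swap a b m) : ℕ) : ℤ) =
      s m + (if m = a then (s b : ℤ) - s a else 0) + (if m = b then (s a : ℤ) - s b else 0) := by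
  rcases eq_or_ne m a with rfl | ha
  · simp [hab]
  rcases eq_or_ne m b with rfl | hb
  · simp [ha]
  · simp [swap_apply_of_ne_of_ne ha hb, ha, hb]

lemma hgtAt_comp_swap {a b : ℤ} (hab : a ≠ b) (p : ℤ) :
    (hgtAt r (s ∘ swap a b) p : ℤ) = hgtAt r s p +
      (if a ∈ Finset.Ioo (p - r) p then (s b : ℤ) - s a else 0) +
      (if b ∈ Finset.Ioo (p - r) p then (s a : ℤ) - s b else 0) := by
  simp only [hgtAt_eq_sum_Ioo_s8, Nat.cast_sum, Function.comp_apply, cast_comp_swap_apply hab,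
    Finset.sum_add_distrib, Finset.sum_ite_eq']

/-- The two orders of adding the ribbon with head `k` and removing the one with head `k'`
have the same total height. -/
lemma hgtAt_add_hgtAt_comp_swap_comm {k k' : ℤ} (hk : IsAddableAt r s k)
    (hk' : IsRemovableAt r s k') :
    hgtAt r s k + hgtAt r (s ∘ swap (k - r) k) k' =
      hgtAt r s k' + hgtAt r (s ∘ swap (k' - r) k') k := by
  obtain ⟨hk1, hk0⟩ := hk
  obtain ⟨hk'0, hk'1⟩ := hk'
  have hr : 0 < r := Nat.pos_of_ne_zero fun h => by simp_all
  zify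
  rw [hgtAt_comp_swap (by omega), hgtAt_comp_swap (by omega)]
  simp only [Finset.mem_Ioo, hk1, hk0, hk'0, hk'1]
  split_ifs <;> omega

lemma Finset.sum_Ico_sub_add_one {M : Type*} [AddCommGroup M] (F : ℤ → M) {a b : ℤ}
    (hab : a ≤ b) : ∑ k ∈ Finset.Ico a b, (F k - F (k + 1)) = F a - F b := by
  induction b, hab using Int.leInduction with
  | base => simp
  | succ b hab ih =>
    rw [← Finset.insert_Ico_right_eq_Ico_add_one hab, Finset.sum_insert (by simp), ih]
    abel

lemma sum_Ico_eq_add_hgtAt (hr : 0 < r) (k : ℤ) :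
    ∑ m ∈ Finset.Ico (k - r) k, s m = s (k - r) + hgtAt r s k := by
  rw [hgtAt_eq_sum_Ioo_s8, ← Finset.Ioo_insert_left (by omega), Finset.sum_insert (by simp)]

lemma sum_Ico_add_one_eq_hgtAt_add (hr : 0 < r) (k : ℤ) :
    ∑ m ∈ Finset.Ico (k + 1 - r) (k + 1), s m = hgtAt r s k + s k := by
  rw [hgtAt_eq_sum_Ioo_s8, show k + 1 - r = k - r + 1 by ring, Finset.Ico_add_one_add_one_eq_Ioc,
    ← Finset.Ioo_insert_right (by omega), Finset.sum_insert (by simp), add_comm]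

lemma sum_Ico_filter_isAddableAt_eq (hr : 0 < r) (hs : ∀ k, s k ≤ 1) {a b : ℤ} (hab : a ≤ b)
    (ha : ∀ m ∈ Finset.Ico (a - r) a, s m = 1) (hb : ∀ m ∈ Finset.Ico (b - r) b, s m = 0) :
    ∑ k ∈ (Finset.Ico a b).filter (IsAddableAt r s), (X : ℤ[X]) ^ (2 * hgtAt r s k) =
      ∑ k ∈ (Finset.Ico a b).filter (IsRemovableAt r s), (X : ℤ[X]) ^ (2 * hgtAt r s k) +
        ∑ i ∈ Finset.range r, (X : ℤ[X]) ^ (2 * i) := by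
  set c : ℤ → ℕ := fun k => ∑ m ∈ Finset.Ico (k - r) k, s m
  have hstep : ∀ k, (X ^ 2 - 1) * ((if IsAddableAt r s k then X ^ (2 * hgtAt r s k) else 0) -
      (if IsRemovableAt r s k then X ^ (2 * hgtAt r s k) else 0)) =
      (X : ℤ[X]) ^ (2 * c k) - X ^ (2 * c (k + 1)) := by
    intro k
    simp only [c]
    rw [sum_Ico_add_one_eq_hgtAt_add hr, sum_Ico_eq_add_hgtAt hr]
    unfold IsAddableAt IsRemovableAt
    have := hs k
    have := hs (k - r)
    interval_cases s k <;> interval_cases s (k - r) <;> simp <;> ring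
  have hca : c a = r := by
    simp only [c, Finset.sum_congr rfl ha, Finset.sum_const, Int.card_Ico, smul_eq_mul, mul_one]
    omega
  have hcb : c b = 0 := Finset.sum_eq_zero hb
  have htel : (X ^ 2 - 1) *
      (∑ k ∈ (Finset.Ico a b).filter (IsAddableAt r s), X ^ (2 * hgtAt r s k) -
        ∑ k ∈ (Finset.Ico a b).filter (IsRemovableAt r s), X ^ (2 * hgtAt r s k)) =
      (X : ℤ[X]) ^ (2 * r) - 1 := by
    rw [Finset.sum_filter, Finset.sum_filter, ← Finset.sum_sub_distrib, Finset.mul_sum,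
      Finset.sum_congr rfl fun k _ => hstep k, Finset.sum_Ico_sub_add_one _ hab, hca, hcb,
      mul_zero, pow_zero]
  have hgeom : (∑ i ∈ Finset.range r, (X : ℤ[X]) ^ (2 * i)) * (X ^ 2 - 1) = X ^ (2 * r) - 1 := by
    simp only [pow_mul, geom_sum_mul]
  refine mul_left_cancel₀ (X_pow_sub_C_ne_zero two_pos (1 : ℤ)) ?_
  rw [C_1]
  linear_combination htel - hgeom

end Ribbons

section RibbonOperators

variable {r : ℕ}

/-- Adds the `r`-ribbon with head `k` to `lam` if `k` is addable, and removes it if `k` is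
removable. -/
noncomputable def ribbonSwap (r : ℕ) (lam : PartT) (k : ℤ) : PartT :=
  ⟨_, (Classical.choose_spec (lam.2.exists_edgeSeq_comp_swap (k - r) k)).1⟩

lemma edgeSeq_ribbonSwap (lam : PartT) (k : ℤ) :
    edgeSeq (ribbonSwap r lam k).1 = edgeSeq lam.1 ∘ swap (k - r) k :=
  (Classical.choose_spec (lam.2.exists_edgeSeq_comp_swap (k - r) k)).2

lemma ribbonSwap_ribbonSwap_self (lam : PartT) (k : ℤ) :
    ribbonSwap r (ribbonSwap r lam k) k = lam := by
  refine PartT.ext_edgeSeq ?_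
  rw [edgeSeq_ribbonSwap, edgeSeq_ribbonSwap, Function.comp_assoc, ← Perm.coe_mul, swap_mul_self,
    Perm.coe_one, Function.comp_id]

lemma ribbonSwap_eq_comm {lam mu : PartT} {k : ℤ} :
    ribbonSwap r mu k = lam ↔ ribbonSwap r lam k = mu :=
  ⟨fun h => h ▸ ribbonSwap_ribbonSwap_self mu k, fun h => h ▸ ribbonSwap_ribbonSwap_self lam k⟩

lemma ribbonSwap_comm (lam : PartT) {k k' : ℤ} (h : k ≠ k') (h₁ : k' ≠ k - r)
    (h₂ : k' - r ≠ k) :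
    ribbonSwap r (ribbonSwap r lam k) k' = ribbonSwap r (ribbonSwap r lam k') k := by
  refine PartT.ext_edgeSeq ?_
  simp only [edgeSeq_ribbonSwap]
  exact comp_swap_comm h h₁ h₂

lemma edgeFlip_edgeSeq_iff (hr : 0 < r) {lam mu : PartT} {k : ℤ} :
    EdgeFlip r (edgeSeq lam.1) (edgeSeq mu.1) k ↔
      IsAddableAt r (edgeSeq lam.1) k ∧ ribbonSwap r lam k = mu := by
  rw [edgeFlip_iff hr, ← edgeSeq_ribbonSwap]
  exact and_congr_right fun _ => ⟨fun h => (PartT.ext_edgeSeq h).symm, fun h => h ▸ rfl⟩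

lemma edgeFlip_edgeSeq_iff' (hr : 0 < r) {lam mu : PartT} {k : ℤ} :
    EdgeFlip r (edgeSeq mu.1) (edgeSeq lam.1) k ↔
      IsRemovableAt r (edgeSeq lam.1) k ∧ ribbonSwap r lam k = mu := by
  rw [edgeFlip_edgeSeq_iff hr, ribbonSwap_eq_comm]
  constructor <;> rintro ⟨hk, rfl⟩ <;>
    simp_all only [edgeSeq_ribbonSwap, isAddableAt_comp_swap_self, and_true]

lemma finite_setOf_isAddableAt (r : ℕ) (lam : PartT) :
    {k | IsAddableAt r (edgeSeq lam.1) k}.Finite := by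
  obtain ⟨N, hl, hr⟩ := lam.2.edgeSeq_eventually
  exact (Finset.Ico (-N : ℤ) (N + r)).finite_toSet.subset fun k hk =>
    mem_Ico_of_isAddableAt_or_isRemovableAt hl hr (Or.inl hk)

lemma finite_setOf_isRemovableAt (r : ℕ) (lam : PartT) :
    {k | IsRemovableAt r (edgeSeq lam.1) k}.Finite := by
  obtain ⟨N, hl, hr⟩ := lam.2.edgeSeq_eventually
  exact (Finset.Ico (-N : ℤ) (N + r)).finite_toSet.subset fun k hk =>
    mem_Ico_of_isAddableAt_or_isRemovableAt hl hr (Or.inr hk)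

noncomputable def addable (r : ℕ) (lam : PartT) : Finset ℤ :=
  (finite_setOf_isAddableAt r lam).toFinset

noncomputable def removable (r : ℕ) (lam : PartT) : Finset ℤ :=
  (finite_setOf_isRemovableAt r lam).toFinset

lemma mem_addable {lam : PartT} {k : ℤ} : k ∈ addable r lam ↔ IsAddableAt r (edgeSeq lam.1) k :=
  Set.Finite.mem_toFinset _

lemma mem_removable {lam : PartT} {k : ℤ} :
    k ∈ removable r lam ↔ IsRemovableAt r (edgeSeq lam.1) k :=
  Set.Finite.mem_toFinset _

lemma mem_removable_ribbonSwap_self {lam : PartT} {k : ℤ} :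
    k ∈ removable r (ribbonSwap r lam k) ↔ k ∈ addable r lam := by
  rw [mem_removable, mem_addable, edgeSeq_ribbonSwap, isRemovableAt_comp_swap_self]

lemma mem_addable_ribbonSwap_self {lam : PartT} {k : ℤ} :
    k ∈ addable r (ribbonSwap r lam k) ↔ k ∈ removable r lam := by
  rw [mem_removable, mem_addable, edgeSeq_ribbonSwap, isAddableAt_comp_swap_self]

lemma injOn_ribbonSwap_addable (lam : PartT) : Set.InjOn (ribbonSwap r lam) (addable r lam) := by
  intro k hk k' hk' h
  rw [Finset.mem_coe, mem_addable] at hk hk'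
  have := congrArg (fun mu : PartT => edgeSeq mu.1) h
  simp only [edgeSeq_ribbonSwap] at this
  exact eq_of_comp_swap_eq (hk.1.trans hk'.1.symm) (hk.2.trans hk'.2.symm) (by simp [hk.1, hk.2])
    this

lemma injOn_ribbonSwap_removable (lam : PartT) :
    Set.InjOn (ribbonSwap r lam) (removable r lam) := by
  intro k hk k' hk' h
  rw [Finset.mem_coe, mem_removable] at hk hk'
  have := congrArg (fun mu : PartT => edgeSeq mu.1) h
  simp only [edgeSeq_ribbonSwap] at this
  exact eq_of_comp_swap_eq (hk.1.trans hk'.1.symm) (hk.2.trans hk'.2.symm) (by simp [hk.1, hk.2])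
    this

lemma sum_addable_eq_sum_removable_add (hr : 0 < r) (lam : PartT) :
    ∑ k ∈ addable r lam, (X : ℤ[X]) ^ (2 * hgtAt r (edgeSeq lam.1) k) =
      ∑ k ∈ removable r lam, (X : ℤ[X]) ^ (2 * hgtAt r (edgeSeq lam.1) k) +
        ∑ i ∈ Finset.range r, (X : ℤ[X]) ^ (2 * i) := by
  obtain ⟨N, hl, hr'⟩ := lam.2.edgeSeq_eventually
  have hbound := fun k => mem_Ico_of_isAddableAt_or_isRemovableAt (r := r) (k := k) hl hr'
  have hA : addable r lam =
      (Finset.Ico (-N : ℤ) (N + r)).filter (IsAddableAt r (edgeSeq lam.1)) := by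
    ext k
    simp only [mem_addable, Finset.mem_filter]
    grind
  have hR : removable r lam =
      (Finset.Ico (-N : ℤ) (N + r)).filter (IsRemovableAt r (edgeSeq lam.1)) := by
    ext k
    simp only [mem_removable, Finset.mem_filter]
    grind
  rw [hA, hR]
  refine sum_Ico_filter_isAddableAt_eq hr (edgeSeq_le_one _) (by omega) (fun m hm => hl m ?_)
    (fun m hm => hr' m ?_) <;> rw [Finset.mem_Ico] at hm <;> omega

lemma mem_addable_and_mem_erase_removable_iff {lam : PartT} {k k' : ℤ} :
    k ∈ addable r lam ∧ k' ∈ (removable r (ribbonSwap r lam k)).erase k ↔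
      IsAddableAt r (edgeSeq lam.1) k ∧ IsRemovableAt r (edgeSeq lam.1) k' ∧
        k' ≠ k - r ∧ k' - r ≠ k := by
  rw [Finset.mem_erase, mem_addable, mem_removable, edgeSeq_ribbonSwap,
    ← isAddableAt_and_isRemovableAt_comp_swap_iff]
  tauto

lemma mem_erase_addable_and_mem_removable_iff {lam : PartT} {k k' : ℤ} :
    k ∈ (addable r (ribbonSwap r lam k')).erase k' ∧ k' ∈ removable r lam ↔
      IsAddableAt r (edgeSeq lam.1) k ∧ IsRemovableAt r (edgeSeq lam.1) k' ∧
        k' ≠ k - r ∧ k' - r ≠ k := by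
  rw [Finset.mem_erase, mem_addable, mem_removable, edgeSeq_ribbonSwap,
    ← isRemovableAt_and_isAddableAt_comp_swap_iff]
  tauto

end RibbonOperators

section Commutation

variable {r : ℕ}

lemma Finsupp.eq_sum_single_of_injOn {α ι M : Type*} [AddCommMonoid M] (x : α →₀ M)
    (K : Finset ι) (m : ι → α) (w : ι → M) (hm : Set.InjOn m K) (hx : ∀ k ∈ K, x (m k) = w k)
    (h0 : ∀ a, (∀ k ∈ K, m k ≠ a) → x a = 0) : x = ∑ k ∈ K, Finsupp.single (m k) (w k) := by
  ext a
  rw [Finsupp.finsetSum_apply]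
  by_cases ha : ∃ k ∈ K, m k = a
  · obtain ⟨k, hk, rfl⟩ := ha
    rw [Finset.sum_eq_single k (fun k' hk' hne => Finsupp.single_eq_of_ne (hm.ne hk' hk hne).symm)
      (absurd hk), Finsupp.single_eq_same, hx k hk]
  · push Not at ha
    rw [h0 a ha, Finset.sum_eq_zero fun k hk => Finsupp.single_eq_of_ne (ha k hk).symm]

lemma up_single_eq (hr : 0 < r) (U : FreeMod →ₗ[ℤ[X]] FreeMod)
    (hU : ∀ (lam mu : PartT) (k : ℤ), EdgeFlip r (edgeSeq lam.1) (edgeSeq mu.1) k →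
      (U (Finsupp.single lam 1)) mu = X ^ hgtAt r (edgeSeq lam.1) k)
    (hU0 : ∀ lam mu : PartT, ¬ CovRib r lam mu → (U (Finsupp.single lam 1)) mu = 0)
    (lam : PartT) :
    U (Finsupp.single lam 1) = ∑ k ∈ addable r lam,
      Finsupp.single (ribbonSwap r lam k) (X ^ hgtAt r (edgeSeq lam.1) k) := by
  refine Finsupp.eq_sum_single_of_injOn _ _ _ _ (injOn_ribbonSwap_addable lam)
    (fun k hk => hU _ _ _ ((edgeFlip_edgeSeq_iff hr).2 ⟨mem_addable.1 hk, rfl⟩))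
    fun mu hmu => hU0 _ _ fun ⟨k, hk⟩ => ?_
  obtain ⟨hadd, rfl⟩ := (edgeFlip_edgeSeq_iff hr).1 hk
  exact hmu k (mem_addable.2 hadd) rfl

lemma down_single_eq (hr : 0 < r) (D : FreeMod →ₗ[ℤ[X]] FreeMod)
    (hD : ∀ (lam mu : PartT) (k : ℤ), EdgeFlip r (edgeSeq mu.1) (edgeSeq lam.1) k →
      (D (Finsupp.single lam 1)) mu = X ^ hgtAt r (edgeSeq mu.1) k)
    (hD0 : ∀ lam mu : PartT, ¬ CovRib r mu lam → (D (Finsupp.single lam 1)) mu = 0)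
    (lam : PartT) :
    D (Finsupp.single lam 1) = ∑ k ∈ removable r lam,
      Finsupp.single (ribbonSwap r lam k) (X ^ hgtAt r (edgeSeq lam.1) k) := by
  refine Finsupp.eq_sum_single_of_injOn _ _ _ _ (injOn_ribbonSwap_removable lam)
    (fun k hk => ?_) fun mu hmu => hD0 _ _ fun ⟨k, hk⟩ => ?_
  · rw [hD _ _ _ ((edgeFlip_edgeSeq_iff' hr).2 ⟨mem_removable.1 hk, rfl⟩), edgeSeq_ribbonSwap,
      hgtAt_comp_swap_self]
  · obtain ⟨hrem, rfl⟩ := (edgeFlip_edgeSeq_iff' hr).1 hk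
    exact hmu k (mem_removable.2 hrem) rfl

lemma apply_apply_single_eq {L₁ L₂ : FreeMod →ₗ[ℤ[X]] FreeMod} {P₁ P₂ : PartT → Finset ℤ}
    (h₁ : ∀ lam, L₁ (Finsupp.single lam 1) =
      ∑ k ∈ P₁ lam, Finsupp.single (ribbonSwap r lam k) (X ^ hgtAt r (edgeSeq lam.1) k))
    (h₂ : ∀ lam, L₂ (Finsupp.single lam 1) =
      ∑ k ∈ P₂ lam, Finsupp.single (ribbonSwap r lam k) (X ^ hgtAt r (edgeSeq lam.1) k))
    (hP : ∀ lam, ∀ k ∈ P₁ lam, k ∈ P₂ (ribbonSwap r lam k)) (lam : PartT) :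
    L₂ (L₁ (Finsupp.single lam 1)) =
      Finsupp.single lam (∑ k ∈ P₁ lam, X ^ (2 * hgtAt r (edgeSeq lam.1) k)) +
        ∑ k ∈ P₁ lam, ∑ k' ∈ (P₂ (ribbonSwap r lam k)).erase k,
          Finsupp.single (ribbonSwap r (ribbonSwap r lam k) k')
            (X ^ hgtAt r (edgeSeq lam.1) k * X ^ hgtAt r (edgeSeq (ribbonSwap r lam k).1) k') := by
  have hstep : ∀ k ∈ P₁ lam,
      L₂ (Finsupp.single (ribbonSwap r lam k) (X ^ hgtAt r (edgeSeq lam.1) k)) =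
        Finsupp.single lam (X ^ (2 * hgtAt r (edgeSeq lam.1) k)) +
          ∑ k' ∈ (P₂ (ribbonSwap r lam k)).erase k,
            Finsupp.single (ribbonSwap r (ribbonSwap r lam k) k')
              (X ^ hgtAt r (edgeSeq lam.1) k *
                X ^ hgtAt r (edgeSeq (ribbonSwap r lam k).1) k') := by
    intro k hk
    have hhgt : hgtAt r (edgeSeq (ribbonSwap r lam k).1) k = hgtAt r (edgeSeq lam.1) k := by
      rw [edgeSeq_ribbonSwap, hgtAt_comp_swap_self]
    rw [← Finsupp.smul_single_one, map_smul, h₂, ← Finset.add_sum_erase _ _ (hP lam k hk),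
      smul_add, Finset.smul_sum, hhgt, ribbonSwap_ribbonSwap_self, Finsupp.smul_single,
      smul_eq_mul, ← pow_add, ← two_mul]
    simp only [Finsupp.smul_single, smul_eq_mul]
  rw [h₁, map_sum, Finset.sum_congr rfl hstep, Finset.sum_add_distrib, Finsupp.single_finsetSum]

lemma sum_sum_erase_removable_eq (lam : PartT) :
    ∑ k ∈ addable r lam, ∑ k' ∈ (removable r (ribbonSwap r lam k)).erase k,
      Finsupp.single (ribbonSwap r (ribbonSwap r lam k) k')
        (X ^ hgtAt r (edgeSeq lam.1) k * X ^ hgtAt r (edgeSeq (ribbonSwap r lam k).1) k') =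
    ∑ k' ∈ removable r lam, ∑ k ∈ (addable r (ribbonSwap r lam k')).erase k',
      Finsupp.single (ribbonSwap r (ribbonSwap r lam k') k)
        ((X : ℤ[X]) ^ hgtAt r (edgeSeq lam.1) k' *
          X ^ hgtAt r (edgeSeq (ribbonSwap r lam k').1) k) := by
  rw [Finset.sum_comm' fun k k' =>
    mem_addable_and_mem_erase_removable_iff.trans mem_erase_addable_and_mem_removable_iff.symm]
  refine Finset.sum_congr rfl fun k' hk' => Finset.sum_congr rfl fun k hk => ?_
  obtain ⟨hadd, hrem, h₁, h₂⟩ := mem_erase_addable_and_mem_removable_iff.1 ⟨hk, hk'⟩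
  rw [ribbonSwap_comm lam (Finset.mem_erase.1 hk).1 h₁ h₂, ← pow_add, ← pow_add,
    edgeSeq_ribbonSwap, edgeSeq_ribbonSwap, hgtAt_add_hgtAt_comp_swap_comm hadd hrem]

end Commutation

/-- The commutation relation `D ∘ U = U ∘ D + (1 + q² + ⋯ + q^{2(r-1)})·Id` for the
height-weighted up and down operators on the `r`-rim hook poset. -/
theorem stmt8 (r : ℕ) (hr : 1 ≤ r)
    (U D : FreeMod →ₗ[Polynomial ℤ] FreeMod)
    (hU : ∀ (lam mu : PartT) (k : ℤ), EdgeFlip r (edgeSeq lam.1) (edgeSeq mu.1) k →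
      (U (Finsupp.single lam 1)) mu = Polynomial.X ^ hgtAt r (edgeSeq lam.1) k)
    (hU0 : ∀ lam mu : PartT, ¬ CovRib r lam mu → (U (Finsupp.single lam 1)) mu = 0)
    (hD : ∀ (lam mu : PartT) (k : ℤ), EdgeFlip r (edgeSeq mu.1) (edgeSeq lam.1) k →
      (D (Finsupp.single lam 1)) mu = Polynomial.X ^ hgtAt r (edgeSeq mu.1) k)
    (hD0 : ∀ lam mu : PartT, ¬ CovRib r mu lam → (D (Finsupp.single lam 1)) mu = 0) :
    D ∘ₗ U = U ∘ₗ D +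
      (∑ i ∈ Finset.range r, (Polynomial.X : Polynomial ℤ) ^ (2 * i)) •
        (LinearMap.id : FreeMod →ₗ[Polynomial ℤ] FreeMod) := by
  have hUs := up_single_eq hr U hU hU0
  have hDs := down_single_eq hr D hD hD0
  refine Finsupp.lhom_ext' fun lam => LinearMap.ext_ring ?_
  simp only [LinearMap.comp_apply, Finsupp.lsingle_apply, LinearMap.add_apply,
    LinearMap.smul_apply, LinearMap.id_apply]
  rw [apply_apply_single_eq hUs hDs (fun _ _ => mem_removable_ribbonSwap_self.2) lam,
    apply_apply_single_eq hDs hUs (fun _ _ => mem_addable_ribbonSwap_self.2) lam,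
    sum_sum_erase_removable_eq, sum_addable_eq_sum_removable_add hr, Finsupp.single_add,
    Finsupp.smul_single_one]
  abel
end

section
/- Fix r ≥ 1 and bit sequences s, t: ℤ → {0,1} with t/s a horizontal r-ribbon strip. Then the witness w for s ≤ʰᵣ t is unique. -/
open scoped Classical

/-- Key step: if two witnesses differ at `i` (with `w i = 1`, `w' i = 0`), then there is a
ribbon (for `w`) at `i` and the witnesses differ the same way at `i - r`. -/
lemma step (r : ℕ) (s t w w' : ℤ → ℕ)
    (h : IsWitness r s t w) (h' : IsWitness r s t w')
    (i : ℤ) (h1 : w i = 1) (h0 : w' i = 0) :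
    Quad r s t w i ∧ w (i - r) = 1 ∧ w' (i - r) = 0 := by
  rcases h'.1 i with ⟨ht', hs'⟩ | q'
  · -- s i = w' i = 0
    rcases h.1 i with ⟨htw, hsw⟩ | q
    · omega
    · refine ⟨q, q.1, ?_⟩
      rw [ht', q.2.1]
  · exact absurd q'.2.2.2 (by omega)

/-- The witness of a horizontal `r`-ribbon strip of bit sequences is unique. -/
theorem stmt10 (r : ℕ) (hr : 1 ≤ r) (s t w w' : ℤ → ℕ)
    (hs : IsBitSeq s) (ht : IsBitSeq t) (hw : IsBitSeq w) (hw' : IsBitSeq w')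
    (h : IsWitness r s t w) (h' : IsWitness r s t w') : w = w' := by
  by_contra hne
  -- find a point of disagreement
  obtain ⟨i, hi⟩ : ∃ i, w i ≠ w' i := by
    by_contra hc
    push_neg at hc
    exact hne (funext hc)
  have key : ∀ (u u' : ℤ → ℕ), IsWitness r s t u → IsWitness r s t u' →
      ∀ j, u j = 1 → u' j = 0 → False := by
    intro u u' hu hu' j h1 h0
    have main : ∀ k : ℕ, u (j - k * r) = 1 ∧ u' (j - k * r) = 0 := by
      intro k
      induction k with
      | zero => simpa using ⟨h1, h0⟩
      | succ n ih =>
        have := step r s t u u' hu hu' (j - n * r) ih.1 ih.2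
        have harith : (j - n * r) - r = j - (n + 1 : ℕ) * r := by push_cast; ring
        rw [harith] at this
        exact ⟨this.2.1, this.2.2⟩
    have quadall : ∀ k : ℕ, Quad r s t u (j - k * r) := fun k =>
      (step r s t u u' hu hu' _ (main k).1 (main k).2).1
    have hinf : {i : ℤ | Quad r s t u i}.Infinite := by
      apply Set.infinite_of_injective_forall_mem
        (f := fun k : ℕ => (j - k * r : ℤ))
      · intro a b hab
        simp only at hab
        have : (a : ℤ) * r = b * r := by omega
        have hr' : (r : ℤ) ≠ 0 := by exact_mod_cast Nat.one_le_iff_ne_zero.mp hr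
        exact_mod_cast mul_right_cancel₀ hr' this
      · intro k; exact quadall k
    exact hinf hu.2
  have hwv := hw i
  have hwv' := hw' i
  interval_cases hx : w i <;> interval_cases hy : w' i
  · exact hi rfl
  · exact key w' w h' h i hy hx
  · exact key w w' h h' i hx hy
  · exact hi rfl
end

section
/- Fix r ≥ 1 and bit sequences s, t, u: ℤ → {0,1} with s ≤ʰᵣ t, t ≤ʰᵣ u, and s ≤ʰᵣ u. Then the set of ribbon positions of u/s is the disjoint union of the set I of ribbon positions of t/s and the set J of ribbon positions of u/t. Moreover, there is a nonnegative integer c such that the sum of the heights of the ribbons of u/s at positions in I exceeds the total height of t/s by c, and the sum of the heights of the ribbons of u/s at positions in J exceeds the total height of u/t by the same c. -/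
open scoped Classical

/-- Indicator of the ribbon set. -/
noncomputable def ribInd (r : ℕ) (s t w : ℤ → ℕ) (i : ℤ) : ℕ :=
  if Quad r s t w i then 1 else 0

lemma ribInd_le_one (r : ℕ) (s t w : ℤ → ℕ) (i : ℤ) : ribInd r s t w i ≤ 1 := by
  unfold ribInd; split <;> omega

lemma ribInd_eq_one_iff (r : ℕ) (s t w : ℤ → ℕ) (i : ℤ) :
    ribInd r s t w i = 1 ↔ Quad r s t w i := by
  unfold ribInd; split <;> simp_all

lemma witness_eq {r : ℕ} {s t w : ℤ → ℕ} (h : IsWitness r s t w) (i : ℤ) :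
    w i = s i + ribInd r s t w i ∧ w (i - r) = t (i - r) + ribInd r s t w i := by
  rcases h.1 i with ⟨h1, h2⟩ | hq
  · have hnq : ¬ Quad r s t w i := by
      rintro ⟨q1, q2, q3, q4⟩; omega
    simp [ribInd, hnq]; omega
  · obtain ⟨q1, q2, q3, q4⟩ := hq
    rw [ribInd, if_pos ⟨q1, q2, q3, q4⟩]
    omega

/-- If `s ≤ʰᵣ t ≤ʰᵣ u` and `s ≤ʰᵣ u`, the ribbon positions of `u/s` are the disjoint
union of those of `t/s` and of `u/t`; moreover there is a `c ∈ ℕ` such that the heights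
of the ribbons of `u/s` at the positions of `t/s` exceed the total height of `t/s` by
`c`, and likewise for `u/t` with the same `c`. -/
theorem stmt11 (r : ℕ) (hr : 1 ≤ r) (s t u : ℤ → ℕ)
    (hs : IsBitSeq s) (ht : IsBitSeq t) (hu : IsBitSeq u)
    (w₁ w₂ w₃ : ℤ → ℕ)
    (h₁ : IsWitness r s t w₁) (h₂ : IsWitness r t u w₂) (h₃ : IsWitness r s u w₃) :
    {i : ℤ | Quad r s u w₃ i} = {i : ℤ | Quad r s t w₁ i} ∪ {i : ℤ | Quad r t u w₂ i} ∧
    Disjoint {i : ℤ | Quad r s t w₁ i} {i : ℤ | Quad r t u w₂ i} ∧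
    ∃ c : ℕ,
      (∑ᶠ i ∈ {i : ℤ | Quad r s t w₁ i}, hgtAt r w₃ i)
        = (∑ᶠ i ∈ {i : ℤ | Quad r s t w₁ i}, hgtAt r w₁ i) + c ∧
      (∑ᶠ i ∈ {i : ℤ | Quad r t u w₂ i}, hgtAt r w₃ i)
        = (∑ᶠ i ∈ {i : ℤ | Quad r t u w₂ i}, hgtAt r w₂ i) + c := by
  -- the δ function is r-periodic
  have hδ : ∀ i : ℤ, ((ribInd r s u w₃) i : ℤ) - (ribInd r s t w₁) i - (ribInd r t u w₂) i =
      ((ribInd r s u w₃) (i + r) : ℤ) - (ribInd r s t w₁) (i + r) - (ribInd r t u w₂) (i + r) := by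
    intro i
    have a1 := (witness_eq h₁ i).1
    have a2 := (witness_eq h₂ i).1
    have a3 := (witness_eq h₃ i).1
    have b1 := (witness_eq h₁ (i + r)).2
    have b2 := (witness_eq h₂ (i + r)).2
    have b3 := (witness_eq h₃ (i + r)).2
    simp only [add_sub_cancel_right] at b1 b2 b3
    omega
  -- δ vanishes far to the right
  obtain ⟨N, hN⟩ := (h₁.2.union (h₂.2.union h₃.2)).bddAbove
  have hbound : ∀ i : ℤ, N < i → (ribInd r s t w₁) i = 0 ∧ (ribInd r t u w₂) i = 0 ∧ (ribInd r s u w₃) i = 0 := by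
    intro i hi
    refine ⟨?_, ?_, ?_⟩ <;>
    · simp only [ribInd]
      rw [if_neg]
      intro hq
      have := hN (by simp [Set.mem_union]; tauto : i ∈ _)
      omega
  have hiter : ∀ (k : ℕ) (i : ℤ), ((ribInd r s u w₃) i : ℤ) - (ribInd r s t w₁) i - (ribInd r t u w₂) i =
      ((ribInd r s u w₃) (i + k * r) : ℤ) - (ribInd r s t w₁) (i + k * r) - (ribInd r t u w₂) (i + k * r) := by
    intro k
    induction k with
    | zero => intro i; simp
    | succ n ih =>
      intro i
      have := hδ (i + n * r)
      have harith : i + n * r + r = i + (n + 1 : ℕ) * r := by push_cast; ring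
      rw [harith] at this
      rw [ih i, this]
  -- hence (ribInd r s u w₃) = (ribInd r s t w₁) + E₂ (comment)
  have hadd : ∀ i : ℤ, (ribInd r s u w₃) i = (ribInd r s t w₁) i + (ribInd r t u w₂) i := by
    intro i
    set k : ℕ := (N + 1 - i).toNat with hk
    have hk1 : (N + 1 - i) ≤ (k : ℤ) := Int.self_le_toNat _
    have hkr : (k : ℤ) ≤ (k : ℤ) * r := by
      have : (1 : ℤ) ≤ (r : ℤ) := by exact_mod_cast hr
      nlinarith [Int.natCast_nonneg k]
    have hfar : N < i + k * r := by omega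
    obtain ⟨z1, z2, z3⟩ := hbound _ hfar
    have := hiter k i
    rw [z1, z2, z3] at this
    have l1 := ribInd_le_one r s t w₁ i
    have l2 := ribInd_le_one r t u w₂ i
    have l3 := ribInd_le_one r s u w₃ i
    omega
  -- part 1 and 2
  have hq1 : ∀ i, Quad r s t w₁ i ↔ (ribInd r s t w₁) i = 1 := fun i => (ribInd_eq_one_iff r s t w₁ i).symm
  have hq2 : ∀ i, Quad r t u w₂ i ↔ (ribInd r t u w₂) i = 1 := fun i => (ribInd_eq_one_iff r t u w₂ i).symm
  have hq3 : ∀ i, Quad r s u w₃ i ↔ (ribInd r s u w₃) i = 1 := fun i => (ribInd_eq_one_iff r s u w₃ i).symm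
  refine ⟨?_, ?_, ?_⟩
  · ext i
    simp only [Set.mem_setOf_eq, Set.mem_union, hq1, hq2, hq3]
    have := hadd i
    have l1 := ribInd_le_one r s t w₁ i
    have l2 := ribInd_le_one r t u w₂ i
    have l3 := ribInd_le_one r s u w₃ i
    constructor
    · intro h'; omega
    · rintro (h' | h') <;> omega
  · rw [Set.disjoint_left]
    intro i hi1 hi2
    rw [Set.mem_setOf_eq, hq1] at hi1
    rw [Set.mem_setOf_eq, hq2] at hi2
    have := hadd i
    have l3 := ribInd_le_one r s u w₃ i
    omega
  -- part 3
  · -- pointwise decompositions of w₃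
    have hw31 : ∀ m : ℤ, w₃ m = w₁ m + (ribInd r t u w₂) m := by
      intro m
      have a1 := (witness_eq h₁ m).1
      have a2 := (witness_eq h₂ m).1
      have a3 := (witness_eq h₃ m).1
      have := hadd m
      omega
    have hw32 : ∀ m : ℤ, w₃ m = w₂ m + (ribInd r s t w₁) (m + r) := by
      intro m
      have a2 := (witness_eq h₂ m).1
      have b1 := (witness_eq h₁ (m + r)).2
      simp only [add_sub_cancel_right] at b1
      have := hw31 m
      omega
    set T₁ : Finset ℤ := h₁.2.toFinset with hT₁
    set T₂ : Finset ℤ := h₂.2.toFinset with hT₂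
    have hmem1 : ∀ m : ℤ, m ∈ T₁ ↔ Quad r s t w₁ m := fun m => Set.Finite.mem_toFinset _
    have hmem2 : ∀ m : ℤ, m ∈ T₂ ↔ Quad r t u w₂ m := fun m => Set.Finite.mem_toFinset _
    have hcoe1 : {i : ℤ | Quad r s t w₁ i} = (↑T₁ : Set ℤ) := (Set.Finite.coe_toFinset _).symm
    have hcoe2 : {i : ℤ | Quad r t u w₂ i} = (↑T₂ : Set ℤ) := (Set.Finite.coe_toFinset _).symm
    rw [hcoe1, hcoe2, finsum_mem_coe_finset, finsum_mem_coe_finset,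
      finsum_mem_coe_finset, finsum_mem_coe_finset]
    refine ⟨((T₁ ×ˢ Finset.Ico 1 r).filter (fun p => p.1 - (p.2 : ℤ) ∈ T₂)).card, ?_, ?_⟩
    · -- first sum
      have hsplit : ∀ i : ℤ, hgtAt r w₃ i = hgtAt r w₁ i + ∑ j ∈ Finset.Ico 1 r, (ribInd r t u w₂) (i - j) := by
        intro i
        unfold hgtAt
        rw [← Finset.sum_add_distrib]
        exact Finset.sum_congr rfl fun j _ => hw31 (i - j)
      calc ∑ i ∈ T₁, hgtAt r w₃ i
          = ∑ i ∈ T₁, (hgtAt r w₁ i + ∑ j ∈ Finset.Ico 1 r, (ribInd r t u w₂) (i - j)) :=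
            Finset.sum_congr rfl fun i _ => hsplit i
        _ = ∑ i ∈ T₁, hgtAt r w₁ i + ∑ i ∈ T₁, ∑ j ∈ Finset.Ico 1 r, (ribInd r t u w₂) (i - j) :=
            Finset.sum_add_distrib
        _ = _ := by
            congr 1
            rw [← Finset.sum_product' T₁ (Finset.Ico 1 r) (fun i j => (ribInd r t u w₂) (i - j)),
              Finset.card_filter]
            refine Finset.sum_congr rfl fun p _ => ?_
            by_cases hp : p.1 - (p.2 : ℤ) ∈ T₂
            · rw [if_pos hp]
              rw [hmem2] at hp
              simp [ribInd, hp]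
            · rw [if_neg hp]
              rw [hmem2] at hp
              simp [ribInd, hp]
    · -- second sum
      have hsplit : ∀ i : ℤ, hgtAt r w₃ i
          = hgtAt r w₂ i + ∑ j ∈ Finset.Ico 1 r, (ribInd r s t w₁) (i - j + r) := by
        intro i
        unfold hgtAt
        rw [← Finset.sum_add_distrib]
        exact Finset.sum_congr rfl fun j _ => hw32 (i - j)
      have hmain : ∑ i ∈ T₂, ∑ j ∈ Finset.Ico 1 r, (ribInd r s t w₁) (i - j + r)
          = ((T₁ ×ˢ Finset.Ico 1 r).filter (fun p => p.1 - (p.2 : ℤ) ∈ T₂)).card := by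
        rw [← Finset.sum_product' T₂ (Finset.Ico 1 r) (fun i j => (ribInd r s t w₁) (i - j + r)),
          Finset.card_filter]
        have step1 : ∑ p ∈ T₂ ×ˢ Finset.Ico 1 r, (ribInd r s t w₁) (p.1 - p.2 + r)
            = ((T₂ ×ˢ Finset.Ico 1 r).filter
                (fun p => p.1 - (p.2 : ℤ) + r ∈ T₁)).card := by
          rw [Finset.card_filter]
          refine Finset.sum_congr rfl fun p _ => ?_
          by_cases hp : p.1 - (p.2 : ℤ) + r ∈ T₁
          · rw [if_pos hp]; rw [hmem1] at hp; simp [ribInd, hp]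
          · rw [if_neg hp]; rw [hmem1] at hp; simp [ribInd, hp]
        rw [step1, ← Finset.card_filter]
        refine Finset.card_bij'
          (fun p _ => ((p.1 - (p.2 : ℤ) + r, r - p.2) : ℤ × ℕ))
          (fun p _ => ((p.1 - (p.2 : ℤ), r - p.2) : ℤ × ℕ)) ?_ ?_ ?_ ?_
        · rintro ⟨x, k⟩ hx
          simp only [Finset.mem_filter, Finset.mem_product, Finset.mem_Ico] at hx ⊢
          obtain ⟨⟨hxT, hk1, hk2⟩, hcond⟩ := hx
          refine ⟨⟨hcond, by omega, by omega⟩, ?_⟩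
          have : (x - (k : ℤ) + r) - ((r - k : ℕ) : ℤ) = x := by
            push_cast [Nat.cast_sub (le_of_lt hk2)]; ring
          rw [this]; exact hxT
        · rintro ⟨x, k⟩ hx
          simp only [Finset.mem_filter, Finset.mem_product, Finset.mem_Ico] at hx ⊢
          obtain ⟨⟨hxT, hk1, hk2⟩, hcond⟩ := hx
          refine ⟨⟨hcond, by omega, by omega⟩, ?_⟩
          have : (x - (k : ℤ)) - ((r - k : ℕ) : ℤ) + r = x := by
            push_cast [Nat.cast_sub (le_of_lt hk2)]; ring
          rw [this]; exact hxT
        · rintro ⟨x, k⟩ hx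
          simp only [Finset.mem_filter, Finset.mem_product, Finset.mem_Ico] at hx
          obtain ⟨⟨hxT, hk1, hk2⟩, hcond⟩ := hx
          have h1 : (x - (k : ℤ) + r) - ((r - k : ℕ) : ℤ) = x := by
            push_cast [Nat.cast_sub (le_of_lt hk2)]; ring
          have h2 : r - (r - k) = k := by omega
          simp [h1, h2]
        · rintro ⟨x, k⟩ hx
          simp only [Finset.mem_filter, Finset.mem_product, Finset.mem_Ico] at hx
          obtain ⟨⟨hxT, hk1, hk2⟩, hcond⟩ := hx
          have h1 : (x - (k : ℤ)) - ((r - k : ℕ) : ℤ) + r = x := by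
            push_cast [Nat.cast_sub (le_of_lt hk2)]; ring
          have h2 : r - (r - k) = k := by omega
          simp [h1, h2]
      calc ∑ i ∈ T₂, hgtAt r w₃ i
          = ∑ i ∈ T₂, (hgtAt r w₂ i + ∑ j ∈ Finset.Ico 1 r, (ribInd r s t w₁) (i - j + r)) :=
            Finset.sum_congr rfl fun i _ => hsplit i
        _ = ∑ i ∈ T₂, hgtAt r w₂ i + ∑ i ∈ T₂, ∑ j ∈ Finset.Ico 1 r, (ribInd r s t w₁) (i - j + r) :=
            Finset.sum_add_distrib
        _ = _ := by rw [hmain]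
end
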